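/- arXiv:1706.08250 — 9 statements merged into one kernel-verified Lean document; each statement's English description precedes it below -/
import Mathlib

section
/- Assume each p_i takes values almost surely in the finite set A. Let α ∈ (0,1) and define the [DBH-SU] critical values by τ_m = max{t ∈ A : F_i(t) < 1 for all i, and (1/m)·Σ_{i=1}^m F_i(t)/(1−F_i(t)) ≤ α} and, for 1 ≤ k ≤ m−1, τ_k = max{t ∈ A : t ≤ τ_m and (1/m)·Σ_{i=1}^m F_i(t)/(1−F_i(τ_m)) ≤ αk/m} (these sets contain 0, hence are nonempty, and the resulting sequence (τ_1,…,τ_m) is nondecreasing). Then the false discovery rate of the step-up procedure SU(τ) satisfies FDR(SU(τ)) ≤ α. -/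
open MeasureTheory ProbabilityTheory Finset

/-- Number of rejections of the step-up procedure with critical values `τ 1, …, τ m`
(convention `τ 0 = 0`): the largest `k ∈ {0, …, m}` such that at least `k` of the
p-values are `≤ τ k`. -/
noncomputable def numRejSU (m : ℕ) (τ : ℕ → ℝ) (q : Fin m → ℝ) : ℕ :=
  sSup {k | k ≤ m ∧ k ≤ (univ.filter (fun j => q j ≤ τ k)).card}

/-- Rejection set of the step-up procedure. -/
noncomputable def rejSU (m : ℕ) (τ : ℕ → ℝ) (q : Fin m → ℝ) : Finset (Fin m) :=
  univ.filter (fun i => q i ≤ τ (numRejSU m τ q))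

/-- False discovery proportion of a rejection set `R` w.r.t. the set of true nulls `H0`. -/
noncomputable def FDP (m : ℕ) (H0 R : Finset (Fin m)) : ℝ :=
  ((R ∩ H0).card : ℝ) / max (R.card : ℝ) 1

/-!
Write `k̂ᵢ` for the number of rejections of the step-up procedure once `pᵢ` is replaced by `0`.
Hypothesis `i` is rejected iff `pᵢ ≤ τ k̂ᵢ`, and then `k̂ = k̂ᵢ`; hence
`FDP = ∑_{i ∈ H₀} 1{pᵢ ≤ τ k̂ᵢ} / k̂ᵢ`. As `k̂ᵢ` only depends on the other p-values, it is
independent of `pᵢ`, and conditioning on `k̂ᵢ = k` gives, for a true null,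
`P(pᵢ ≤ τ k) / k ≤ Fᵢ(τ k) / k ≤ P(pᵢ > τ m) · Fᵢ(τ k) / ((1 - Fᵢ(τ m)) k)`.
On `{pᵢ > τ m}` zeroing `pᵢ` adds one to every count `#{j | p j ≤ τ k}`, so there `k̂ᵢ` equals an
index `K` that does not depend on `i`, and the DBH condition
`∑ᵢ Fᵢ(τ K) / (1 - Fᵢ(τ m)) ≤ α K` bounds the resulting sum by `α` pointwise.
-/

open Function

noncomputable def stepUpIndex (m : ℕ) (N : ℕ → ℕ) : ℕ :=
  sSup {k | k ≤ m ∧ k ≤ N k}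

section stepUpIndex

variable {m k : ℕ} {N N' : ℕ → ℕ}

private lemma bddAbove_stepUpIndex : BddAbove {k | k ≤ m ∧ k ≤ N k} :=
  ⟨m, fun _ hk => hk.1⟩

lemma stepUpIndex_mem : stepUpIndex m N ≤ m ∧ stepUpIndex m N ≤ N (stepUpIndex m N) :=
  Nat.sSup_mem (⟨0, Nat.zero_le m, Nat.zero_le _⟩ : Set.Nonempty {k | k ≤ m ∧ k ≤ N k})
    bddAbove_stepUpIndex

lemma le_stepUpIndex (hk : k ≤ m) (hN : k ≤ N k) : k ≤ stepUpIndex m N :=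
  le_csSup bddAbove_stepUpIndex ⟨hk, hN⟩

lemma stepUpIndex_mono (h : ∀ k ≤ m, N k ≤ N' k) : stepUpIndex m N ≤ stepUpIndex m N' :=
  le_stepUpIndex stepUpIndex_mem.1 (stepUpIndex_mem.2.trans (h _ stepUpIndex_mem.1))

lemma stepUpIndex_congr (h : ∀ k ≤ m, N k = N' k) : stepUpIndex m N = stepUpIndex m N' :=
  le_antisymm (stepUpIndex_mono fun k hk => (h k hk).le)
    (stepUpIndex_mono fun k hk => (h k hk).ge)

lemma measurable_stepUpIndex {X : Type*} [MeasurableSpace X] {N : X → ℕ → ℕ}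
    (hN : ∀ k, Measurable fun x => N x k) : Measurable fun x => stepUpIndex m (N x) := by
  have hfin : Measurable fun v : Fin (m + 1) → ℕ =>
      stepUpIndex m fun k => if h : k < m + 1 then v ⟨k, h⟩ else 0 :=
    measurable_of_countable _
  convert hfin.comp (measurable_pi_lambda (fun x (k : Fin (m + 1)) => N x k) fun k => hN k)
    using 1
  ext x
  exact stepUpIndex_congr fun k hk => by simp [Nat.lt_succ_of_le hk]

end stepUpIndex

noncomputable def countLE {m : ℕ} (τ : ℕ → ℝ) (q : Fin m → ℝ) (k : ℕ) : ℕ :=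
  #{j | q j ≤ τ k}

noncomputable def numRejSUZeroAt (m : ℕ) (τ : ℕ → ℝ) (q : Fin m → ℝ) (i : Fin m) : ℕ :=
  numRejSU m τ (update q i 0)

section stepUp

variable {m : ℕ} {τ : ℕ → ℝ} {q : Fin m → ℝ} {i : Fin m} {k : ℕ}

lemma numRejSU_eq_stepUpIndex : numRejSU m τ q = stepUpIndex m (countLE τ q) := rfl

lemma measurable_countLE (τ : ℕ → ℝ) (k : ℕ) :
    Measurable fun q : Fin m → ℝ => countLE τ q k := by
  simp_rw [countLE, card_filter]
  exact Finset.measurable_sum _ fun j _ =>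
    Measurable.ite (measurableSet_le (measurable_pi_apply j) measurable_const)
      measurable_const measurable_const

lemma measurable_numRejSU (τ : ℕ → ℝ) : Measurable (numRejSU m τ) :=
  measurable_stepUpIndex (measurable_countLE τ)

lemma measurable_numRejSUZeroAt (τ : ℕ → ℝ) (i : Fin m) :
    Measurable fun q : Fin m → ℝ => numRejSUZeroAt m τ q i :=
  (measurable_numRejSU τ).comp (measurable_update' (a := i) |>.comp
    (measurable_id.prodMk measurable_const))

lemma card_rejSU (hτ : MonotoneOn τ (Set.Iic m)) (q : Fin m → ℝ) :
    #(rejSU m τ q) = numRejSU m τ q := by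
  obtain ⟨hle, hcount⟩ := stepUpIndex_mem (m := m) (N := countLE τ q)
  refine le_antisymm ?_ hcount
  rcases hle.lt_or_eq with hlt | heq
  · have hnext : ¬ numRejSU m τ q + 1 ≤ countLE τ q (numRejSU m τ q + 1) := fun h =>
      (le_stepUpIndex hlt h).not_gt (Nat.lt_succ_self _)
    have hmono : countLE τ q (numRejSU m τ q) ≤ countLE τ q (numRejSU m τ q + 1) :=
      card_le_card fun j hj => by
        simp only [mem_filter, mem_univ, true_and] at hj ⊢
        exact hj.trans (hτ hle hlt (Nat.le_succ _))
    exact Nat.lt_succ_iff.1 (hmono.trans_lt (not_le.1 hnext))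
  · rw [numRejSU_eq_stepUpIndex, heq]
    exact (card_le_univ _).trans_eq (Fintype.card_fin m)

lemma countLE_update_zero (hk : 0 ≤ τ k) :
    countLE τ (update q i 0) k = countLE τ q k + if q i ≤ τ k then 0 else 1 := by
  have hfilter : univ.filter (fun j => update q i 0 j ≤ τ k)
      = insert i (univ.filter fun j => q j ≤ τ k) := by
    ext j
    rcases eq_or_ne j i with rfl | hj
    · simpa using hk
    · simp [hj]
  rw [countLE, hfilter, card_insert_eq_ite]
  simp only [mem_filter, mem_univ, true_and]
  split_ifs <;> rfl

lemma numRejSU_le_numRejSUZeroAt (hτ_nonneg : ∀ k ≤ m, 0 ≤ τ k) :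
    numRejSU m τ q ≤ numRejSUZeroAt m τ q i :=
  stepUpIndex_mono (N := countLE τ q) (N' := countLE τ (update q i 0)) fun k hk => by
    rw [countLE_update_zero (hτ_nonneg k hk)]
    exact Nat.le_add_right _ _

lemma one_le_numRejSUZeroAt (hτ_nonneg : ∀ k ≤ m, 0 ≤ τ k) (hm : 1 ≤ m) :
    1 ≤ numRejSUZeroAt m τ q i :=
  le_stepUpIndex hm (card_pos.2 ⟨i, by simpa using hτ_nonneg 1 hm⟩)

lemma numRejSU_eq_numRejSUZeroAt (hτ_nonneg : ∀ k ≤ m, 0 ≤ τ k)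
    (h : q i ≤ τ (numRejSUZeroAt m τ q i)) : numRejSU m τ q = numRejSUZeroAt m τ q i := by
  obtain ⟨hle, hcount⟩ : numRejSUZeroAt m τ q i ≤ m ∧
      numRejSUZeroAt m τ q i ≤ countLE τ (update q i 0) (numRejSUZeroAt m τ q i) :=
    stepUpIndex_mem
  refine le_antisymm (numRejSU_le_numRejSUZeroAt hτ_nonneg)
    (le_stepUpIndex (N := countLE τ q) hle ?_)
  rwa [countLE_update_zero (hτ_nonneg _ hle), if_pos h, add_zero] at hcount

lemma numRejSUZeroAt_eq_of_lt (hτ : MonotoneOn τ (Set.Iic m)) (hτ_nonneg : ∀ k ≤ m, 0 ≤ τ k)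
    (h : τ m < q i) :
    numRejSUZeroAt m τ q i = stepUpIndex m fun k => countLE τ q k + 1 :=
  stepUpIndex_congr (N := countLE τ (update q i 0)) fun k hk => by
    rw [countLE_update_zero (hτ_nonneg k hk),
      if_neg (not_le.2 ((hτ hk (le_refl m) hk).trans_lt h))]

lemma ite_le_numRejSU_eq_ite_le_numRejSUZeroAt (hτ : MonotoneOn τ (Set.Iic m))
    (hτ_nonneg : ∀ k ≤ m, 0 ≤ τ k) (hm : 1 ≤ m) :
    (if q i ≤ τ (numRejSU m τ q) then (max (numRejSU m τ q : ℝ) 1)⁻¹ else 0) =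
      if q i ≤ τ (numRejSUZeroAt m τ q i) then (numRejSUZeroAt m τ q i : ℝ)⁻¹ else 0 := by
  by_cases h : q i ≤ τ (numRejSUZeroAt m τ q i)
  · have hpos : (1 : ℝ) ≤ numRejSUZeroAt m τ q i := by
      exact_mod_cast one_le_numRejSUZeroAt hτ_nonneg hm
    rw [numRejSU_eq_numRejSUZeroAt hτ_nonneg h, if_pos h, if_pos h, max_eq_left hpos]
  · have hle : numRejSUZeroAt m τ q i ≤ m := stepUpIndex_mem.1
    refine (if_neg fun h' => h (h'.trans ?_)).trans (if_neg h).symm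
    exact hτ (numRejSU_le_numRejSUZeroAt hτ_nonneg |>.trans hle) hle
      (numRejSU_le_numRejSUZeroAt hτ_nonneg)

lemma FDP_rejSU_eq_sum (hτ : MonotoneOn τ (Set.Iic m)) (hτ_nonneg : ∀ k ≤ m, 0 ≤ τ k)
    (hm : 1 ≤ m) (H0 : Finset (Fin m)) (q : Fin m → ℝ) :
    FDP m H0 (rejSU m τ q) = ∑ i ∈ H0,
      if q i ≤ τ (numRejSUZeroAt m τ q i) then (numRejSUZeroAt m τ q i : ℝ)⁻¹ else 0 := by
  rw [FDP, card_rejSU hτ, rejSU, filter_inter, univ_inter, card_filter, Nat.cast_sum, sum_div]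
  refine sum_congr rfl fun i _ => ?_
  rw [← ite_le_numRejSU_eq_ite_le_numRejSUZeroAt hτ hτ_nonneg hm]
  split_ifs <;> simp

lemma sum_ite_lt_numRejSUZeroAt_le (hτ : MonotoneOn τ (Set.Iic m))
    (hτ_nonneg : ∀ k ≤ m, 0 ≤ τ k) (hm : 1 ≤ m) {c : Fin m → ℕ → ℝ} {α : ℝ}
    (hc : ∀ i, ∀ k ∈ Icc 1 m, 0 ≤ c i k) (hα : ∀ k ∈ Icc 1 m, ∑ i, c i k ≤ α)
    (H0 : Finset (Fin m)) (q : Fin m → ℝ) :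
    ∑ i ∈ H0, (if τ m < q i then c i (numRejSUZeroAt m τ q i) else 0) ≤ α := by
  set K := stepUpIndex m fun k => countLE τ q k + 1
  have hK : K ∈ Icc 1 m :=
    mem_Icc.2 ⟨le_stepUpIndex hm (Nat.le_add_left _ _), stepUpIndex_mem.1⟩
  calc ∑ i ∈ H0, (if τ m < q i then c i (numRejSUZeroAt m τ q i) else 0)
      ≤ ∑ i ∈ H0, c i K := sum_le_sum fun i _ => by
        split_ifs with h
        · rw [numRejSUZeroAt_eq_of_lt hτ hτ_nonneg h]
        · exact hc i K hK
    _ ≤ ∑ i, c i K := sum_le_sum_of_subset_of_nonneg (subset_univ H0) fun i _ _ => hc i K hK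
    _ ≤ α := hα K hK

end stepUp

lemma ProbabilityTheory.iIndepFun.indepFun_comp_update {Ω ι β γ : Type*} [MeasurableSpace Ω]
    [MeasurableSpace β] [MeasurableSpace γ] [Fintype ι] [DecidableEq ι] {μ : Measure Ω}
    {f : ι → Ω → β} (hf : iIndepFun f μ) (hmeas : ∀ i, Measurable (f i)) (i : ι) (c : β)
    {g : (ι → β) → γ} (hg : Measurable g) :
    IndepFun (f i) (fun ω => g (update (fun j => f j ω) i c)) μ := by
  let extend : (({i}ᶜ : Finset ι) → β) → ι → β := fun w j =>
    if h : j = i then c else w ⟨j, by simpa using h⟩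
  have hext : Measurable fun w => g (extend w) := by
    refine hg.comp (measurable_pi_lambda _ fun j => ?_)
    by_cases h : j = i
    · simp only [extend, dif_pos h]; exact measurable_const
    · simp only [extend, dif_neg h]; exact measurable_pi_apply _
  refine (hf.indepFun_finset {i} {i}ᶜ disjoint_compl_right hmeas).comp
    (measurable_pi_apply ⟨i, mem_singleton_self i⟩) hext |>.congr ?_ ?_
  · rfl
  · refine Filter.Eventually.of_forall fun ω => congrArg g (funext fun j => ?_)
    by_cases h : j = i
    · subst h; simp [extend]
    · simp [extend, h]

section IndepIte

lemma ite_comp_eq_sum_indicator {Ω α : Type*} {X : Ω → α} {K : Ω → ℕ} {S : Finset ℕ}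
    {r : ℕ → α → Prop} [∀ k, DecidablePred (r k)] {ω : Ω} (hK : K ω ∈ S) (g : ℕ → ℝ) :
    (if r (K ω) (X ω) then g (K ω) else 0) =
      ∑ k ∈ S, (X ⁻¹' {x | r k x} ∩ K ⁻¹' {k}).indicator (fun _ => g k) ω := by
  rw [sum_eq_single_of_mem (K ω) hK fun k _ hk => Set.indicator_of_notMem (fun h => hk h.2.symm) _]
  by_cases h : r (K ω) (X ω) <;> simp [h]

variable {Ω α : Type*} [MeasurableSpace Ω] [MeasurableSpace α] {P : Measure Ω}
  {X : Ω → α} {K : Ω → ℕ} {S : Finset ℕ} {r : ℕ → α → Prop} [∀ k, DecidablePred (r k)]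

lemma integrable_ite_comp [IsFiniteMeasure P] (hX : Measurable X) (hK : Measurable K)
    (hS : ∀ ω, K ω ∈ S) (hr : ∀ k, MeasurableSet {x | r k x}) (g : ℕ → ℝ) :
    Integrable (fun ω => if r (K ω) (X ω) then g (K ω) else 0) P := by
  rw [funext fun ω => ite_comp_eq_sum_indicator (hS ω) g]
  exact integrable_finsetSum _ fun k _ =>
    (integrable_const _).indicator ((hX (hr k)).inter (hK (measurableSet_singleton k)))

lemma ProbabilityTheory.IndepFun.integral_ite_comp [IsFiniteMeasure P] (hXK : IndepFun X K P)
    (hX : Measurable X) (hK : Measurable K) (hS : ∀ ω, K ω ∈ S)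
    (hr : ∀ k, MeasurableSet {x | r k x}) (g : ℕ → ℝ) :
    ∫ ω, (if r (K ω) (X ω) then g (K ω) else 0) ∂P =
      ∑ k ∈ S, P.real (K ⁻¹' {k}) * (P.real (X ⁻¹' {x | r k x}) * g k) := by
  have hmeas : ∀ k, MeasurableSet (X ⁻¹' {x | r k x} ∩ K ⁻¹' {k}) := fun k =>
    (hX (hr k)).inter (hK (measurableSet_singleton k))
  rw [funext fun ω => ite_comp_eq_sum_indicator (hS ω) g,
    integral_finsetSum _ fun k _ => (integrable_const _).indicator (hmeas k)]
  refine sum_congr rfl fun k _ => ?_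
  rw [integral_indicator_const _ (hmeas k), smul_eq_mul, measureReal_def,
    hXK.measure_inter_preimage_eq_mul _ _ (hr k) (measurableSet_singleton k),
    ENNReal.toReal_mul, ← measureReal_def, ← measureReal_def]
  ring

lemma ProbabilityTheory.IndepFun.integral_ite_comp_le [IsFiniteMeasure P] (hXK : IndepFun X K P)
    (hX : Measurable X) (hK : Measurable K) (hS : ∀ ω, K ω ∈ S)
    {r' : ℕ → α → Prop} [∀ k, DecidablePred (r' k)]
    (hr : ∀ k, MeasurableSet {x | r k x}) (hr' : ∀ k, MeasurableSet {x | r' k x}) {g g' : ℕ → ℝ}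
    (hle : ∀ k ∈ S, P.real (X ⁻¹' {x | r k x}) * g k ≤ P.real (X ⁻¹' {x | r' k x}) * g' k) :
    ∫ ω, (if r (K ω) (X ω) then g (K ω) else 0) ∂P ≤
      ∫ ω, (if r' (K ω) (X ω) then g' (K ω) else 0) ∂P := by
  rw [hXK.integral_ite_comp hX hK hS hr, hXK.integral_ite_comp hX hK hS hr']
  exact sum_le_sum fun k hk => mul_le_mul_of_nonneg_left (hle k hk) measureReal_nonneg

end IndepIte

section FDR

variable {Ω : Type*} [MeasurableSpace Ω] {P : Measure Ω} [IsProbabilityMeasure P]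

lemma ProbabilityTheory.IndepFun.integral_ite_inv_le {m : ℕ} {X : Ω → ℝ} {K : Ω → ℕ}
    (hXK : IndepFun X K P) (hX : Measurable X) (hK : Measurable K) (hKS : ∀ ω, K ω ∈ Icc 1 m)
    {τ : ℕ → ℝ} {F : ℝ → ℝ} (hnull : ∀ k ∈ Icc 1 m, P.real {ω | X ω ≤ τ k} ≤ F (τ k))
    (hF : ∀ k ∈ Icc 1 m, 0 ≤ F (τ k)) (hFm : F (τ m) < 1) :
    ∫ ω, (if X ω ≤ τ (K ω) then (K ω : ℝ)⁻¹ else 0) ∂P ≤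
      ∫ ω, (if τ m < X ω then F (τ (K ω)) / ((1 - F (τ m)) * K ω) else 0) ∂P := by
  refine hXK.integral_ite_comp_le (r := fun k x => x ≤ τ k) (r' := fun _ x => τ m < x)
    (g := fun k => (k : ℝ)⁻¹) (g' := fun k => F (τ k) / ((1 - F (τ m)) * k)) hX hK hKS
    (fun _ => measurableSet_Iic) (fun _ => measurableSet_Ioi) fun k hk => ?_
  have hm : m ∈ Icc 1 m := mem_Icc.2 ⟨(mem_Icc.1 hk).1.trans (mem_Icc.1 hk).2, le_rfl⟩
  have hk0 : (0 : ℝ) < k := by exact_mod_cast (mem_Icc.1 hk).1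
  have htail : 1 - F (τ m) ≤ P.real (X ⁻¹' {x | τ m < x}) := by
    have hcompl : X ⁻¹' {x | τ m < x} = {ω | X ω ≤ τ m}ᶜ := by ext; simp
    rw [hcompl, probReal_compl_eq_one_sub (measurableSet_le hX measurable_const)]
    linarith [hnull m hm]
  calc P.real (X ⁻¹' {x | x ≤ τ k}) * (k : ℝ)⁻¹ ≤ F (τ k) * (k : ℝ)⁻¹ := by
        gcongr
        exact hnull k hk
    _ = (1 - F (τ m)) * (F (τ k) / ((1 - F (τ m)) * k)) := by
        field_simp [(sub_pos.2 hFm).ne']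
    _ ≤ P.real (X ⁻¹' {x | τ m < x}) * (F (τ k) / ((1 - F (τ m)) * k)) := by
        gcongr
        exact div_nonneg (hF k hk) (mul_nonneg (sub_pos.2 hFm).le hk0.le)

theorem integral_FDP_rejSU_le {m : ℕ} (hm : 1 ≤ m) {p : Fin m → Ω → ℝ}
    (hmeas : ∀ i, Measurable (p i)) (hindep : iIndepFun p P) (H0 : Finset (Fin m))
    {F : Fin m → ℝ → ℝ} {τ : ℕ → ℝ} {α : ℝ} (hτ : MonotoneOn τ (Set.Iic m)) (hτ0 : τ 0 = 0)
    (hnull : ∀ i ∈ H0, ∀ k ∈ Icc 1 m, P.real {ω | p i ω ≤ τ k} ≤ F i (τ k))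
    (hF : ∀ i, ∀ k ∈ Icc 1 m, 0 ≤ F i (τ k)) (hFm : ∀ i, F i (τ m) < 1)
    (hsum : ∀ k ∈ Icc 1 m, ∑ i, F i (τ k) / (1 - F i (τ m)) ≤ α * k) :
    ∫ ω, FDP m H0 (rejSU m τ fun j => p j ω) ∂P ≤ α := by
  have hτ_nonneg : ∀ k ≤ m, 0 ≤ τ k := fun k hk =>
    hτ0 ▸ hτ (Nat.zero_le m) hk (Nat.zero_le k)
  set K : Fin m → Ω → ℕ := fun i ω => numRejSUZeroAt m τ (fun j => p j ω) i
  set c : Fin m → ℕ → ℝ := fun i k => F i (τ k) / ((1 - F i (τ m)) * k)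
  have hK : ∀ i, Measurable (K i) := fun i =>
    (measurable_numRejSUZeroAt τ i).comp (measurable_pi_lambda _ hmeas)
  have hKS : ∀ i ω, K i ω ∈ Icc 1 m := fun i ω =>
    mem_Icc.2 ⟨one_le_numRejSUZeroAt hτ_nonneg hm, stepUpIndex_mem.1⟩
  have hind : ∀ i, IndepFun (p i) (K i) P := fun i =>
    hindep.indepFun_comp_update hmeas i 0 (measurable_numRejSU τ)
  have hc : ∀ i, ∀ k ∈ Icc 1 m, 0 ≤ c i k := fun i k hk =>
    div_nonneg (hF i k hk) (mul_nonneg (sub_pos.2 (hFm i)).le (Nat.cast_nonneg k))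
  have hcsum : ∀ k ∈ Icc 1 m, ∑ i, c i k ≤ α := fun k hk => by
    simp_rw [c, ← div_div, ← sum_div]
    exact (div_le_iff₀ (by exact_mod_cast (mem_Icc.1 hk).1)).2 (hsum k hk)
  have hintZ : ∀ i, Integrable (fun ω => if τ m < p i ω then c i (K i ω) else 0) P :=
    fun i => integrable_ite_comp (r := fun _ x => τ m < x) (hmeas i) (hK i) (hKS i)
      (fun _ => measurableSet_Ioi) (c i)
  calc ∫ ω, FDP m H0 (rejSU m τ fun j => p j ω) ∂P
      = ∑ i ∈ H0, ∫ ω, (if p i ω ≤ τ (K i ω) then (K i ω : ℝ)⁻¹ else 0) ∂P := by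
        simp_rw [FDP_rejSU_eq_sum hτ hτ_nonneg hm]
        exact integral_finsetSum _ fun i _ => integrable_ite_comp (r := fun k x => x ≤ τ k)
          (hmeas i) (hK i) (hKS i) (fun _ => measurableSet_Iic) fun k => (k : ℝ)⁻¹
    _ ≤ ∑ i ∈ H0, ∫ ω, (if τ m < p i ω then c i (K i ω) else 0) ∂P :=
        sum_le_sum fun i hi => (hind i).integral_ite_inv_le (hmeas i) (hK i) (hKS i)
          (hnull i hi) (hF i) (hFm i)
    _ = ∫ ω, ∑ i ∈ H0, (if τ m < p i ω then c i (K i ω) else 0) ∂P :=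
        (integral_finsetSum _ fun i _ => hintZ i).symm
    _ ≤ ∫ _, α ∂P := integral_mono (integrable_finsetSum _ fun i _ => hintZ i)
        (integrable_const α) fun _ => sum_ite_lt_numRejSUZeroAt_le hτ hτ_nonneg hm hc hcsum H0 _
    _ = α := by simp

end FDR

def dbhCandidatesLast {m : ℕ} (A : Finset ℝ) (F : Fin m → ℝ → ℝ) (α : ℝ) : Set ℝ :=
  {t | t ∈ A ∧ (∀ i, F i t < 1) ∧ (1 / (m : ℝ)) * ∑ i : Fin m, F i t / (1 - F i t) ≤ α}

def dbhCandidates {m : ℕ} (A : Finset ℝ) (F : Fin m → ℝ → ℝ) (α τm : ℝ) (k : ℕ) : Set ℝ :=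
  {t | t ∈ A ∧ t ≤ τm ∧ (1 / (m : ℝ)) * ∑ i : Fin m, F i t / (1 - F i τm) ≤ α * k / m}

section DBH

variable {m : ℕ} {A : Finset ℝ} {F : Fin m → ℝ → ℝ} {α : ℝ} {τ : ℕ → ℝ}

lemma sum_le_of_mem_dbhCandidates {τm t : ℝ} {k : ℕ} (hm : 0 < m)
    (ht : t ∈ dbhCandidates A F α τm k) : ∑ i, F i t / (1 - F i τm) ≤ α * k := by
  have hm' : (0 : ℝ) < m := by exact_mod_cast hm
  have h := ht.2.2
  rwa [one_div_mul_eq_div, div_le_div_iff_of_pos_right hm'] at h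

lemma mem_dbhCandidates (hτm : IsGreatest (dbhCandidatesLast A F α) (τ m))
    (hτk : ∀ k, 1 ≤ k → k < m → IsGreatest (dbhCandidates A F α (τ m) k) (τ k)) :
    ∀ k ∈ Icc 1 m, τ k ∈ dbhCandidates A F α (τ m) k := by
  intro k hk
  obtain ⟨hk1, hkm⟩ := mem_Icc.1 hk
  rcases hkm.lt_or_eq with hlt | rfl
  · exact (hτk k hk1 hlt).1
  · obtain ⟨hA, -, hsum⟩ := hτm.1
    have hk0 : (k : ℝ) ≠ 0 := by positivity
    exact ⟨hA, le_rfl, by rwa [mul_div_assoc, div_self hk0, mul_one]⟩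

lemma monotoneOn_of_dbh (hα : 0 ≤ α) (hA : ∀ t ∈ A, t ∈ Set.Icc (0 : ℝ) 1) (hτ0 : τ 0 = 0)
    (hτm : IsGreatest (dbhCandidatesLast A F α) (τ m))
    (hτk : ∀ k, 1 ≤ k → k < m → IsGreatest (dbhCandidates A F α (τ m) k) (τ k)) :
    MonotoneOn τ (Set.Iic m) := by
  have hmem := mem_dbhCandidates hτm hτk
  intro k hkm l hlm hkl
  rcases Nat.eq_zero_or_pos k with rfl | hk1
  · rcases Nat.eq_zero_or_pos l with rfl | hl1
    · exact le_rfl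
    · exact hτ0 ▸ (hA _ (hmem l (mem_Icc.2 ⟨hl1, hlm⟩)).1).1
  obtain ⟨hkA, hkτm, hksum⟩ := hmem k (mem_Icc.2 ⟨hk1, hkm⟩)
  rcases (Set.mem_Iic.1 hlm).lt_or_eq with hlt | rfl
  · refine (hτk l (hk1.trans_le hkl) hlt).2 ⟨hkA, hkτm, hksum.trans ?_⟩
    gcongr
  · exact hkτm

end DBH

theorem fdr_DBH_SU_le_alpha_general
    {Ω : Type*} [MeasurableSpace Ω] (P : Measure Ω) [IsProbabilityMeasure P]
    (m : ℕ) (hm : 1 ≤ m)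
    (p : Fin m → Ω → ℝ) (hmeas : ∀ i, Measurable (p i))
    (hindep : iIndepFun p P)
    (H0 : Finset (Fin m))
    (F : Fin m → ℝ → ℝ)
    (hFrange : ∀ i, ∀ t ∈ Set.Icc (0 : ℝ) 1, F i t ∈ Set.Icc (0 : ℝ) 1)
    (hnull : ∀ i ∈ H0, ∀ t ∈ Set.Icc (0 : ℝ) 1,
      P {ω | p i ω ≤ t} ≤ ENNReal.ofReal (F i t))
    (A : Finset ℝ) (hA : ∀ t ∈ A, t ∈ Set.Icc (0 : ℝ) 1)
    (α : ℝ) (hα : α ∈ Set.Ioo (0 : ℝ) 1)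
    (τ : ℕ → ℝ) (hτ0 : τ 0 = 0)
    (hτm : IsGreatest {t : ℝ | t ∈ A ∧ (∀ i, F i t < 1) ∧
      (1 / (m : ℝ)) * ∑ i : Fin m, F i t / (1 - F i t) ≤ α} (τ m))
    (hτk : ∀ k, 1 ≤ k → k < m → IsGreatest {t : ℝ | t ∈ A ∧ t ≤ τ m ∧
      (1 / (m : ℝ)) * ∑ i : Fin m, F i t / (1 - F i (τ m)) ≤ α * k / m} (τ k))
    :
    ∫ ω, FDP m H0 (rejSU m τ (fun j => p j ω)) ∂P ≤ α := by
  have hmem := mem_dbhCandidates hτm hτk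
  have hτ01 : ∀ k ∈ Icc 1 m, τ k ∈ Set.Icc (0 : ℝ) 1 := fun k hk => hA _ (hmem k hk).1
  refine integral_FDP_rejSU_le hm hmeas hindep H0 (monotoneOn_of_dbh hα.1.le hA hτ0 hτm hτk) hτ0
    (fun i hi k hk => ?_) (fun i k hk => (hFrange i _ (hτ01 k hk)).1) hτm.1.2.1
    fun k hk => sum_le_of_mem_dbhCandidates hm (hmem k hk)
  exact ENNReal.toReal_le_of_le_ofReal (hFrange i _ (hτ01 k hk)).1 (hnull i hi _ (hτ01 k hk))

/-- the [DBH-SU] procedure controls the FDR at level `α`. -/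
theorem fdr_DBH_SU_le_alpha
    {Ω : Type*} [MeasurableSpace Ω] (P : Measure Ω) [IsProbabilityMeasure P]
    (m : ℕ) (hm : 1 ≤ m)
    (p : Fin m → Ω → ℝ) (hmeas : ∀ i, Measurable (p i))
    (hp01 : ∀ i ω, p i ω ∈ Set.Icc (0 : ℝ) 1)
    (hindep : iIndepFun p P)
    (H0 : Finset (Fin m))
    (F : Fin m → ℝ → ℝ)
    (hFmono : ∀ i, MonotoneOn (F i) (Set.Icc 0 1))
    (hFrange : ∀ i, ∀ t ∈ Set.Icc (0 : ℝ) 1, F i t ∈ Set.Icc (0 : ℝ) 1)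
    (hF0 : ∀ i, F i 0 = 0) (hF1 : ∀ i, F i 1 = 1)
    (hnull : ∀ i ∈ H0, ∀ t ∈ Set.Icc (0 : ℝ) 1,
      P {ω | p i ω ≤ t} ≤ ENNReal.ofReal (F i t))
    (A : Finset ℝ) (hA0 : (0 : ℝ) ∈ A) (hA : ∀ t ∈ A, t ∈ Set.Icc (0 : ℝ) 1)
    (hpA : ∀ i, ∀ᵐ ω ∂P, p i ω ∈ A)
    (α : ℝ) (hα : α ∈ Set.Ioo (0 : ℝ) 1)
    (τ : ℕ → ℝ) (hτ0 : τ 0 = 0)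
    (hτm : IsGreatest {t : ℝ | t ∈ A ∧ (∀ i, F i t < 1) ∧
      (1 / (m : ℝ)) * ∑ i : Fin m, F i t / (1 - F i t) ≤ α} (τ m))
    (hτk : ∀ k, 1 ≤ k → k < m → IsGreatest {t : ℝ | t ∈ A ∧ t ≤ τ m ∧
      (1 / (m : ℝ)) * ∑ i : Fin m, F i t / (1 - F i (τ m)) ≤ α * k / m} (τ k))
    :
    ∫ ω, FDP m H0 (rejSU m τ (fun j => p j ω)) ∂P ≤ α :=
  fdr_DBH_SU_le_alpha_general P m hm p hmeas hindep H0 F hFrange hnull A hA α hα τ hτ0 hτm hτk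
end

section
/- Assume each p_i takes values almost surely in the finite set A. Let α ∈ (0,1) and define the [A-DBH-SD] critical values by τ_k = max{t ∈ A : F_i(t) < 1 for all i, and for every subset S ⊆ {1,…,m} with |S| = m−k+1, Σ_{i∈S} F_i(t)/(1−F_i(t)) ≤ αk} for 1 ≤ k ≤ m (these sets contain 0, hence are nonempty, and the resulting sequence is nondecreasing). Then the false discovery rate of the step-down procedure SD(τ) satisfies FDR(SD(τ)) ≤ α. -/
open MeasureTheory ProbabilityTheory Finset

/-- Number of rejections of the step-down procedure with critical values `τ 1, …, τ m`
(convention `τ 0 = 0`). -/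
noncomputable def numRejSD (m : ℕ) (τ : ℕ → ℝ) (q : Fin m → ℝ) : ℕ :=
  sSup {k | k ≤ m ∧ ∀ k' ≤ k, k' ≤ (univ.filter (fun j => q j ≤ τ k')).card}

/-- Rejection set of the step-down procedure. -/
noncomputable def rejSD (m : ℕ) (τ : ℕ → ℝ) (q : Fin m → ℝ) : Finset (Fin m) :=
  univ.filter (fun i => q i ≤ τ (numRejSD m τ q))

/-!
For a hypothesis `j`, let `λⱼ` be the first `k ≥ 1` such that fewer than `k` of the *other*
p-values lie below `τ k` (`StepDown.stallIndex`). It depends only on the other p-values, `j` is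
rejected iff `p j ≤ τ λⱼ`, and then at least `λⱼ` hypotheses are rejected, so
`FDP ≤ ∑_{j ∈ H0} 1{p j ≤ τ λⱼ} / λⱼ`. Conditioning on `λⱼ = ℓ` (independent of `p j`) and using
`P (p j ≤ τ ℓ) ≤ F j (τ ℓ)`, each term has expectation at most that of
`1{p j > τ λⱼ} gⱼ(λⱼ) / λⱼ` with odds `gⱼ(ℓ) = F j (τ ℓ) / (1 - F j (τ ℓ))`. Pointwise, the
non-rejected `j` all have `λⱼ = k + 1`, where `k` is the number of steps of the procedure, and
there are at most `m - k` of them, so by the definition of `τ (k + 1)` these terms sum to at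
most `α`.
-/

namespace ProbabilityTheory

section

variable {Ω ι β : Type*} {mΩ : MeasurableSpace Ω} {μ : Measure Ω} {X : Ω → ι} {Y : Ω → β}
  {s : Finset ι} {φ ψ : ι → β → ℝ}

lemma apply_eq_sum_indicator_preimage (hXs : ∀ ω, X ω ∈ s) (ω : Ω) :
    φ (X ω) (Y ω) = ∑ i ∈ s, (X ⁻¹' {i}).indicator (fun ω => φ i (Y ω)) ω := by
  rw [sum_eq_single_of_mem (X ω) (hXs ω) fun i _ hi =>
    Set.indicator_of_notMem (fun h => hi h.symm) _]
  simp

variable [MeasurableSpace ι] [MeasurableSingletonClass ι]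

lemma integrable_apply_of_forall_mem (hX : Measurable X) (hXs : ∀ ω, X ω ∈ s)
    (hφ : ∀ i ∈ s, Integrable (fun ω => φ i (Y ω)) μ) :
    Integrable (fun ω => φ (X ω) (Y ω)) μ := by
  simp_rw [apply_eq_sum_indicator_preimage hXs]
  exact integrable_finsetSum _ fun i hi => (hφ i hi).indicator (hX (measurableSet_singleton i))

variable [MeasurableSpace β]

lemma IndepFun.integral_apply_eq_sum (hXY : IndepFun X Y μ) (hX : Measurable X)
    (hXs : ∀ ω, X ω ∈ s) (hφm : ∀ i, Measurable (φ i))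
    (hφ : ∀ i ∈ s, Integrable (fun ω => φ i (Y ω)) μ) :
    ∫ ω, φ (X ω) (Y ω) ∂μ = ∑ i ∈ s, μ.real (X ⁻¹' {i}) * ∫ ω, φ i (Y ω) ∂μ := by
  simp_rw [apply_eq_sum_indicator_preimage hXs]
  rw [integral_finsetSum _ fun i hi => (hφ i hi).indicator (hX (measurableSet_singleton i))]
  refine sum_congr rfl fun i hi => ?_
  have hi1 : Measurable (({i} : Set ι).indicator (1 : ι → ℝ)) :=
    measurable_one.indicator (measurableSet_singleton i)
  have hmul : (X ⁻¹' {i}).indicator (fun ω => φ i (Y ω)) =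
      fun ω => ({i} : Set ι).indicator 1 (X ω) * φ i (Y ω) := by
    ext ω
    by_cases h : X ω = i <;> simp [h]
  rw [hmul]
  refine ((hXY.comp hi1 (hφm i)).integral_fun_mul_eq_mul_integral
    (hi1.comp hX).aestronglyMeasurable (hφ i hi).aestronglyMeasurable).trans ?_
  congr 1
  rw [← integral_indicator_one (hX (measurableSet_singleton i))]
  rfl

lemma IndepFun.integral_apply_mono (hXY : IndepFun X Y μ) (hX : Measurable X)
    (hXs : ∀ ω, X ω ∈ s) (hφm : ∀ i, Measurable (φ i)) (hψm : ∀ i, Measurable (ψ i))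
    (hφ : ∀ i ∈ s, Integrable (fun ω => φ i (Y ω)) μ)
    (hψ : ∀ i ∈ s, Integrable (fun ω => ψ i (Y ω)) μ)
    (h : ∀ i ∈ s, ∫ ω, φ i (Y ω) ∂μ ≤ ∫ ω, ψ i (Y ω) ∂μ) :
    ∫ ω, φ (X ω) (Y ω) ∂μ ≤ ∫ ω, ψ (X ω) (Y ω) ∂μ := by
  rw [hXY.integral_apply_eq_sum hX hXs hφm hφ, hXY.integral_apply_eq_sum hX hXs hψm hψ]
  exact sum_le_sum fun i hi => mul_le_mul_of_nonneg_left (h i hi) measureReal_nonneg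

end

section

variable {Ω : Type*} {mΩ : MeasurableSpace Ω} {μ : Measure Ω} {Y : Ω → ℝ}

lemma integrable_ite_le [IsFiniteMeasure μ] (hY : Measurable Y) (t a b : ℝ) :
    Integrable (fun ω => if Y ω ≤ t then a else b) μ :=
  Integrable.piecewise (s := {ω | Y ω ≤ t}) (measurableSet_le hY measurable_const)
    (integrable_const a).integrableOn (integrable_const b).integrableOn

lemma integral_ite_le_le_odds_mul [IsProbabilityMeasure μ] (hY : Measurable Y)
    {t f c : ℝ} (hf₀ : 0 ≤ f) (hf₁ : f < 1) (hc : 0 ≤ c)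
    (hYt : μ {ω | Y ω ≤ t} ≤ ENNReal.ofReal f) :
    ∫ ω, (if Y ω ≤ t then c else 0) ∂μ ≤ ∫ ω, (if Y ω ≤ t then 0 else f / (1 - f) * c) ∂μ := by
  have hB : MeasurableSet {ω | Y ω ≤ t} := measurableSet_le hY measurable_const
  have hb : μ.real {ω | Y ω ≤ t} ≤ f := ENNReal.toReal_le_of_le_ofReal hf₀ hYt
  have h₁ : (fun ω => if Y ω ≤ t then c else 0) = {ω | Y ω ≤ t}.indicator fun _ => c := rfl
  have h₂ : (fun ω => if Y ω ≤ t then 0 else f / (1 - f) * c) =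
      {ω | Y ω ≤ t}ᶜ.indicator fun _ => f / (1 - f) * c := by
    ext ω; by_cases h : Y ω ≤ t <;> simp [h]
  rw [h₁, h₂, integral_indicator_const _ hB, integral_indicator_const _ hB.compl,
    probReal_compl_eq_one_sub hB, smul_eq_mul, smul_eq_mul, ← mul_assoc]
  refine mul_le_mul_of_nonneg_right ?_ hc
  rw [mul_div_assoc', le_div_iff₀ (sub_pos.2 hf₁)]
  nlinarith

end

end ProbabilityTheory

section CriticalValues

variable {m : ℕ} {A : Finset ℝ} {F : Fin m → ℝ → ℝ} {α : ℝ}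

variable (A F α) in
def dbhSDSet (k : ℕ) : Set ℝ :=
  {t | t ∈ A ∧ (∀ i, F i t < 1) ∧
    ∀ S : Finset (Fin m), #S = m - k + 1 → ∑ i ∈ S, F i t / (1 - F i t) ≤ α * k}

lemma zero_mem_dbhSDSet (hA0 : 0 ∈ A) (hF0 : ∀ i, F i 0 = 0) (hα : 0 ≤ α) (k : ℕ) :
    0 ∈ dbhSDSet A F α k :=
  ⟨hA0, fun i => by simp [hF0], fun S _ => by simp only [hF0]; simp; positivity⟩

lemma dbhSDSet_mono (hα : 0 ≤ α) (hFA : ∀ i, ∀ t ∈ A, 0 ≤ F i t) {a b : ℕ} (ha : 1 ≤ a)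
    (ham : a ≤ m) (hab : a ≤ b) : dbhSDSet A F α a ⊆ dbhSDSet A F α b := by
  rintro t ⟨htA, hlt, hsum⟩
  refine ⟨htA, hlt, fun S hS => ?_⟩
  obtain ⟨S', hSS', -, hS'⟩ :=
    exists_subsuperset_card_eq (subset_univ S) (show #S ≤ m - a + 1 by omega) (by simp; omega)
  calc ∑ i ∈ S, F i t / (1 - F i t) ≤ ∑ i ∈ S', F i t / (1 - F i t) :=
        sum_le_sum_of_subset_of_nonneg hSS' fun i _ _ =>
          div_nonneg (hFA i t htA) (sub_nonneg.2 (hlt i).le)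
    _ ≤ α * a := hsum S' hS'
    _ ≤ α * b := by gcongr

lemma monotoneOn_of_isGreatest_dbhSDSet (hα : 0 ≤ α) (hA0 : 0 ∈ A) (hF0 : ∀ i, F i 0 = 0)
    (hFA : ∀ i, ∀ t ∈ A, 0 ≤ F i t) {τ : ℕ → ℝ} (hτ0 : τ 0 = 0)
    (hτ : ∀ k, 1 ≤ k → k ≤ m → IsGreatest (dbhSDSet A F α k) (τ k)) :
    MonotoneOn τ (Set.Iic m) := by
  intro a ha b hb hab
  rcases Nat.eq_zero_or_pos a with rfl | ha₀
  · rcases Nat.eq_zero_or_pos b with rfl | hb₀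
    · exact le_rfl
    · exact hτ0 ▸ (hτ b hb₀ hb).2 (zero_mem_dbhSDSet hA0 hF0 hα b)
  · exact (hτ a ha₀ ha).mono (hτ b (by omega) hb) (dbhSDSet_mono hα hFA ha₀ ha hab)

end CriticalValues

namespace StepDown

variable {m : ℕ} (τ : ℕ → ℝ) (q : Fin m → ℝ)

lemma card_filter_erase_lt (j : Fin m) (t : ℝ) : #{l ∈ univ.erase j | q l ≤ t} < m := by
  refine (card_filter_le _ _).trans_lt ?_
  rw [card_erase_of_mem (mem_univ j), card_univ, Fintype.card_fin]
  exact Nat.sub_lt j.pos one_pos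

noncomputable def stallIndex (j : Fin m) : ℕ :=
  Nat.find (⟨m, card_filter_erase_lt q j (τ m)⟩ : ∃ k, #{l ∈ univ.erase j | q l ≤ τ k} < k)

variable {τ q} {j : Fin m}

lemma card_filter_le_mono (s : Finset (Fin m)) {t t' : ℝ} (h : t ≤ t') :
    #{l ∈ s | q l ≤ t} ≤ #{l ∈ s | q l ≤ t'} :=
  card_le_card fun l hl => by
    simp only [mem_filter] at hl ⊢
    exact ⟨hl.1, hl.2.trans h⟩

lemma card_filter_eq_card_filter_erase_add (j : Fin m) (t : ℝ) :
    #{l | q l ≤ t} = #{l ∈ univ.erase j | q l ≤ t} + if q j ≤ t then 1 else 0 := by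
  rw [card_filter, card_filter, ← add_sum_erase _ _ (mem_univ j), add_comm]

lemma card_filter_erase_stallIndex_lt :
    #{l ∈ univ.erase j | q l ≤ τ (stallIndex τ q j)} < stallIndex τ q j := by
  unfold stallIndex; exact Nat.find_spec (p := fun k => #{l ∈ univ.erase j | q l ≤ τ k} < k) _

lemma le_card_filter_erase_of_lt_stallIndex {k : ℕ} (hk : k < stallIndex τ q j) :
    k ≤ #{l ∈ univ.erase j | q l ≤ τ k} := by
  unfold stallIndex at hk
  exact not_lt.1 (Nat.find_min (p := fun k => #{l ∈ univ.erase j | q l ≤ τ k} < k) _ hk)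

lemma one_le_stallIndex : 1 ≤ stallIndex τ q j :=
  Nat.one_le_iff_ne_zero.2 fun h => by
    simpa [h] using card_filter_erase_stallIndex_lt (τ := τ) (q := q) (j := j)

lemma stallIndex_le : stallIndex τ q j ≤ m :=
  Nat.find_min' _ (card_filter_erase_lt q j (τ m))

lemma numRejSD_isGreatest :
    IsGreatest {k | k ≤ m ∧ ∀ k' ≤ k, k' ≤ #{l | q l ≤ τ k'}} (numRejSD m τ q) :=
  ⟨Nat.sSup_mem ⟨0, Nat.zero_le m, fun k' hk' => by omega⟩ ⟨m, fun _ hk => hk.1⟩,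
    fun _ hk => le_csSup ⟨m, fun _ hk => hk.1⟩ hk⟩

lemma numRejSD_le_card_rejSD : numRejSD m τ q ≤ #(rejSD m τ q) :=
  numRejSD_isGreatest.1.2 _ le_rfl

lemma stallIndex_sub_one_le_numRejSD : stallIndex τ q j - 1 ≤ numRejSD m τ q := by
  refine numRejSD_isGreatest.2 ⟨by have := stallIndex_le (τ := τ) (q := q) (j := j); omega,
    fun k hk => ?_⟩
  rcases Nat.eq_zero_or_pos k with rfl | hk0
  · exact Nat.zero_le _
  rw [card_filter_eq_card_filter_erase_add j]
  exact (le_card_filter_erase_of_lt_stallIndex (by omega)).trans (Nat.le_add_right _ _)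

lemma le_of_stallIndex_le_numRejSD (h : stallIndex τ q j ≤ numRejSD m τ q) :
    q j ≤ τ (stallIndex τ q j) := by
  have hle := numRejSD_isGreatest.1.2 _ h
  rw [card_filter_eq_card_filter_erase_add j] at hle
  have := card_filter_erase_stallIndex_lt (τ := τ) (q := q) (j := j)
  by_contra hq
  rw [if_neg hq] at hle
  omega

lemma stallIndex_le_numRejSD (hτ : MonotoneOn τ (Set.Iic m)) (h : q j ≤ τ (stallIndex τ q j)) :
    stallIndex τ q j ≤ numRejSD m τ q := by
  have h₁ : 1 ≤ stallIndex τ q j := one_le_stallIndex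
  have hm : stallIndex τ q j ≤ m := stallIndex_le
  refine numRejSD_isGreatest.2 ⟨hm, fun k hk => ?_⟩
  rcases hk.lt_or_eq with hlt | rfl
  · rw [card_filter_eq_card_filter_erase_add j]
    exact (le_card_filter_erase_of_lt_stallIndex hlt).trans (Nat.le_add_right _ _)
  · have hprev : stallIndex τ q j - 1 ≤ #{l ∈ univ.erase j | q l ≤ τ (stallIndex τ q j)} :=
      (le_card_filter_erase_of_lt_stallIndex (by omega)).trans (card_filter_le_mono _
        (hτ (Set.mem_Iic.2 (by omega)) (Set.mem_Iic.2 hm) (by omega)))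
    rw [card_filter_eq_card_filter_erase_add j, if_pos h]
    omega

lemma stallIndex_le_numRejSD_iff (hτ : MonotoneOn τ (Set.Iic m)) :
    stallIndex τ q j ≤ numRejSD m τ q ↔ q j ≤ τ (stallIndex τ q j) :=
  ⟨le_of_stallIndex_le_numRejSD, stallIndex_le_numRejSD hτ⟩

lemma mem_rejSD_iff (hτ : MonotoneOn τ (Set.Iic m)) :
    j ∈ rejSD m τ q ↔ q j ≤ τ (stallIndex τ q j) := by
  have hN := (numRejSD_isGreatest (τ := τ) (q := q)).1.1
  simp only [rejSD, mem_filter, mem_univ, true_and]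
  refine ⟨fun hj => ?_, fun hj => hj.trans (hτ (Set.mem_Iic.2 stallIndex_le) (Set.mem_Iic.2 hN)
    (stallIndex_le_numRejSD hτ hj))⟩
  by_contra hq
  have hlt := not_le.1 (mt (stallIndex_le_numRejSD_iff hτ).1 hq)
  exact hq (hj.trans (hτ (Set.mem_Iic.2 hN) (Set.mem_Iic.2 stallIndex_le) hlt.le))

lemma fdp_rejSD_le (hτ : MonotoneOn τ (Set.Iic m)) (H0 : Finset (Fin m)) :
    FDP m H0 (rejSD m τ q) ≤
      ∑ j ∈ H0, if q j ≤ τ (stallIndex τ q j) then ((stallIndex τ q j : ℕ) : ℝ)⁻¹ else 0 := by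
  rw [FDP, inter_comm, ← filter_mem_eq_inter, card_filter, Nat.cast_sum, sum_div]
  refine sum_le_sum fun j _ => ?_
  by_cases hj : j ∈ rejSD m τ q
  · have hq := (mem_rejSD_iff hτ).1 hj
    have hle : (stallIndex τ q j : ℝ) ≤ #(rejSD m τ q) := by
      exact_mod_cast (stallIndex_le_numRejSD hτ hq).trans numRejSD_le_card_rejSD
    rw [if_pos hj, if_pos hq, Nat.cast_one, one_div]
    exact inv_anti₀ (by exact_mod_cast one_le_stallIndex) (hle.trans (le_max_left _ _))
  · rw [if_neg hj, Nat.cast_zero, zero_div]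
    split_ifs <;> positivity

lemma sum_ite_div_stallIndex_le (hτ : MonotoneOn τ (Set.Iic m)) {α : ℝ} (hα : 0 ≤ α)
    {w : Fin m → ℕ → ℝ} (hw₀ : ∀ j, ∀ ℓ ∈ Icc 1 m, 0 ≤ w j ℓ)
    (hw : ∀ ℓ ∈ Icc 1 m, ∀ S : Finset (Fin m), #S = m - ℓ + 1 → ∑ j ∈ S, w j ℓ ≤ α * ℓ)
    (s : Finset (Fin m)) :
    ∑ j ∈ s, (if q j ≤ τ (stallIndex τ q j) then 0 else w j (stallIndex τ q j) / stallIndex τ q j)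
      ≤ α := by
  set N := numRejSD m τ q
  simp_rw [← ite_not _ _ (0 : ℝ)]
  rw [← sum_filter]
  set J := {j ∈ s | ¬q j ≤ τ (stallIndex τ q j)}
  rcases J.eq_empty_or_nonempty with hJ | ⟨j₀, hj₀⟩
  · simpa [hJ] using hα
  have hstall : ∀ j ∈ J, stallIndex τ q j = N + 1 := fun j hj => by
    have h₁ := stallIndex_sub_one_le_numRejSD (τ := τ) (q := q) (j := j)
    have h₂ := mt (stallIndex_le_numRejSD_iff hτ).1 (mem_filter.1 hj).2
    omega
  have hNm : N + 1 ≤ m := hstall j₀ hj₀ ▸ stallIndex_le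
  have hJ : J ⊆ ({l | ¬q l ≤ τ (N + 1)} : Finset (Fin m)) := fun j hj => by
    simpa [hstall j hj] using (mem_filter.1 hj).2
  have hJcard : #J ≤ m - (N + 1) + 1 := by
    have hN : N ≤ #{l | q l ≤ τ (N + 1)} := (numRejSD_isGreatest.1.2 N le_rfl).trans
      (card_filter_le_mono _ (hτ (Set.mem_Iic.2 (by omega)) (Set.mem_Iic.2 hNm) (by omega)))
    have := card_le_card hJ
    rw [filter_not, card_sdiff_of_subset (filter_subset _ _), card_univ, Fintype.card_fin] at this
    omega
  obtain ⟨S, hJS, -, hS⟩ :=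
    exists_subsuperset_card_eq (subset_univ J) hJcard (by simp; omega)
  have hNmem : N + 1 ∈ Icc 1 m := mem_Icc.2 ⟨by omega, hNm⟩
  calc ∑ j ∈ J, w j (stallIndex τ q j) / stallIndex τ q j
      = (∑ j ∈ J, w j (N + 1)) / (N + 1 : ℕ) := by
        rw [sum_div]; exact sum_congr rfl fun j hj => by rw [hstall j hj]
    _ ≤ (∑ j ∈ S, w j (N + 1)) / (N + 1 : ℕ) := by
        gcongr
        exact fun j _ _ => hw₀ j _ hNmem
    _ ≤ α := by
        rw [div_le_iff₀ (by positivity)]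
        exact hw _ hNmem S hS

section Independence

variable {Ω : Type*} {mΩ : MeasurableSpace Ω} {μ : Measure Ω} {p : Fin m → Ω → ℝ}

lemma measurable_stallIndex (hp : ∀ l ≠ j, Measurable (p l)) :
    Measurable fun ω => stallIndex τ (p · ω) j := by
  refine measurable_find (p := fun ω k => #{l ∈ univ.erase j | p l ω ≤ τ k} < k) _ fun k => ?_
  simp_rw [card_filter]
  refine measurableSet_lt (Finset.measurable_sum _ fun l hl => ?_) measurable_const
  exact Measurable.ite (measurableSet_le (hp l (ne_of_mem_erase hl)) measurable_const)
    measurable_const measurable_const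

lemma indepFun_stallIndex (hp : ∀ l, Measurable (p l)) (hindep : iIndepFun p μ) (j : Fin m) :
    IndepFun (fun ω => stallIndex τ (p · ω) j) (p j) μ := by
  rw [IndepFun_iff_Indep]
  have h := indep_iSup_of_disjoint (fun l => (hp l).comap_le)
    ((iIndepFun_iff_iIndep _ _ _).1 hindep) (disjoint_compl_left (a := ({j} : Set (Fin m))))
  refine indep_of_indep_of_le_right (indep_of_indep_of_le_left h ?_) ?_
  · refine Measurable.comap_le (measurable_stallIndex fun l hl => ?_)
    exact measurable_iff_comap_le.2 (le_iSup₂ (f := fun l (_ : l ∈ ({j}ᶜ : Set (Fin m))) =>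
      MeasurableSpace.comap (p l) inferInstance) l hl)
  · exact le_iSup₂ (f := fun l (_ : l ∈ ({j} : Set (Fin m))) =>
      MeasurableSpace.comap (p l) inferInstance) j rfl

variable (hp : ∀ l, Measurable (p l))
include hp

lemma integrable_ite_stallIndex [IsFiniteMeasure μ] (j : Fin m) (a b : ℕ → ℝ) :
    Integrable (fun ω => if p j ω ≤ τ (stallIndex τ (p · ω) j) then a (stallIndex τ (p · ω) j)
      else b (stallIndex τ (p · ω) j)) μ :=
  integrable_apply_of_forall_mem (φ := fun ℓ y => if y ≤ τ ℓ then a ℓ else b ℓ)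
    (measurable_stallIndex fun l _ => hp l) (fun _ => mem_Icc.2 ⟨one_le_stallIndex, stallIndex_le⟩)
    fun _ _ => integrable_ite_le (hp j) _ _ _

lemma integral_ite_stallIndex_le [IsProbabilityMeasure μ] (j : Fin m) (hindep : iIndepFun p μ)
    {f : ℕ → ℝ}
    (hf : ∀ ℓ ∈ Icc 1 m, 0 ≤ f ℓ ∧ f ℓ < 1 ∧ μ {ω | p j ω ≤ τ ℓ} ≤ ENNReal.ofReal (f ℓ)) :
    ∫ ω, (if p j ω ≤ τ (stallIndex τ (p · ω) j) then ((stallIndex τ (p · ω) j : ℕ) : ℝ)⁻¹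
      else 0) ∂μ ≤
    ∫ ω, (if p j ω ≤ τ (stallIndex τ (p · ω) j) then 0
      else f (stallIndex τ (p · ω) j) / (1 - f (stallIndex τ (p · ω) j)) /
        stallIndex τ (p · ω) j) ∂μ := by
  refine (indepFun_stallIndex hp hindep j).integral_apply_mono
    (φ := fun ℓ y => if y ≤ τ ℓ then (ℓ : ℝ)⁻¹ else 0)
    (ψ := fun ℓ y => if y ≤ τ ℓ then 0 else f ℓ / (1 - f ℓ) / ℓ)
    (measurable_stallIndex fun l _ => hp l) (fun _ => mem_Icc.2 ⟨one_le_stallIndex, stallIndex_le⟩)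
    (fun _ => measurable_const.ite measurableSet_Iic measurable_const)
    (fun _ => measurable_const.ite measurableSet_Iic measurable_const)
    (fun _ _ => integrable_ite_le (hp j) _ _ _) (fun _ _ => integrable_ite_le (hp j) _ _ _)
    fun ℓ hℓ => ?_
  obtain ⟨hf₀, hf₁, hfP⟩ := hf ℓ hℓ
  simpa only [div_eq_mul_inv] using
    integral_ite_le_le_odds_mul (hp j) hf₀ hf₁ (by positivity) hfP

end Independence

end StepDown

open StepDown

theorem fdr_A_DBH_SD_le_alpha_general
    {Ω : Type*} [MeasurableSpace Ω] (P : Measure Ω) [IsProbabilityMeasure P]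
    (m : ℕ)
    (p : Fin m → Ω → ℝ) (hmeas : ∀ i, Measurable (p i))
    (hindep : iIndepFun p P)
    (H0 : Finset (Fin m))
    (F : Fin m → ℝ → ℝ)
    (hFrange : ∀ i, ∀ t ∈ Set.Icc (0 : ℝ) 1, F i t ∈ Set.Icc (0 : ℝ) 1)
    (hF0 : ∀ i, F i 0 = 0)
    (hnull : ∀ i ∈ H0, ∀ t ∈ Set.Icc (0 : ℝ) 1,
      P {ω | p i ω ≤ t} ≤ ENNReal.ofReal (F i t))
    (A : Finset ℝ) (hA0 : (0 : ℝ) ∈ A) (hA : ∀ t ∈ A, t ∈ Set.Icc (0 : ℝ) 1)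
    (α : ℝ) (hα : α ∈ Set.Ioo (0 : ℝ) 1)
    (τ : ℕ → ℝ) (hτ0 : τ 0 = 0)
    (hτk : ∀ k, 1 ≤ k → k ≤ m → IsGreatest {t : ℝ | t ∈ A ∧ (∀ i, F i t < 1) ∧
      ∀ S : Finset (Fin m), S.card = m - k + 1 →
        ∑ i ∈ S, F i t / (1 - F i t) ≤ α * k} (τ k))
    :
    ∫ ω, FDP m H0 (rejSD m τ (fun j => p j ω)) ∂P ≤ α := by
  have hFA : ∀ i, ∀ t ∈ A, 0 ≤ F i t := fun i t ht => (hFrange i t (hA t ht)).1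
  have hτ : MonotoneOn τ (Set.Iic m) :=
    monotoneOn_of_isGreatest_dbhSDSet hα.1.le hA0 hF0 hFA hτ0 hτk
  have hτmem : ∀ ℓ ∈ Icc 1 m, τ ℓ ∈ dbhSDSet A F α ℓ := fun ℓ hℓ =>
    (hτk ℓ (mem_Icc.1 hℓ).1 (mem_Icc.1 hℓ).2).1
  let L (j : Fin m) (ω : Ω) : ℕ := stallIndex τ (p · ω) j
  let g (j : Fin m) (ℓ : ℕ) : ℝ := F j (τ ℓ) / (1 - F j (τ ℓ))
  have hrej : ∀ j, Integrable (fun ω => if p j ω ≤ τ (L j ω) then ((L j ω : ℕ) : ℝ)⁻¹ else 0) P :=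
    fun j => integrable_ite_stallIndex hmeas j (fun ℓ => (ℓ : ℝ)⁻¹) fun _ => 0
  have hacc : ∀ j, Integrable (fun ω => if p j ω ≤ τ (L j ω) then 0 else g j (L j ω) / L j ω) P :=
    fun j => integrable_ite_stallIndex hmeas j (fun _ => 0) fun ℓ => g j ℓ / ℓ
  calc ∫ ω, FDP m H0 (rejSD m τ (fun j => p j ω)) ∂P
      ≤ ∫ ω, ∑ j ∈ H0, (if p j ω ≤ τ (L j ω) then ((L j ω : ℕ) : ℝ)⁻¹ else 0) ∂P :=
        integral_mono_of_nonneg (ae_of_all _ fun ω => by unfold FDP; positivity)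
          (integrable_finsetSum _ fun j _ => hrej j) (ae_of_all _ fun ω => fdp_rejSD_le hτ H0)
    _ ≤ ∫ ω, ∑ j ∈ H0, (if p j ω ≤ τ (L j ω) then 0 else g j (L j ω) / L j ω) ∂P := by
        rw [integral_finsetSum _ fun j _ => hrej j, integral_finsetSum _ fun j _ => hacc j]
        refine sum_le_sum fun j hj => integral_ite_stallIndex_le (τ := τ) hmeas j hindep
          (f := fun ℓ => F j (τ ℓ)) fun ℓ hℓ => ?_
        obtain ⟨hτA, hF1, -⟩ := hτmem ℓ hℓ
        exact ⟨hFA j _ hτA, hF1 j, hnull j hj _ (hA _ hτA)⟩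
    _ ≤ ∫ _, α ∂P :=
        integral_mono (integrable_finsetSum _ fun j _ => hacc j) (integrable_const α) fun ω =>
          sum_ite_div_stallIndex_le hτ hα.1.le (fun j ℓ hℓ => div_nonneg (hFA j _ (hτmem ℓ hℓ).1)
            (sub_nonneg.2 ((hτmem ℓ hℓ).2.1 j).le)) (fun ℓ hℓ => (hτmem ℓ hℓ).2.2) H0
    _ = α := by simp

/-- the adaptive [A-DBH-SD] procedure controls the FDR at level `α`. -/
theorem fdr_A_DBH_SD_le_alpha
    {Ω : Type*} [MeasurableSpace Ω] (P : Measure Ω) [IsProbabilityMeasure P]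
    (m : ℕ) (hm : 1 ≤ m)
    (p : Fin m → Ω → ℝ) (hmeas : ∀ i, Measurable (p i))
    (hp01 : ∀ i ω, p i ω ∈ Set.Icc (0 : ℝ) 1)
    (hindep : iIndepFun p P)
    (H0 : Finset (Fin m))
    (F : Fin m → ℝ → ℝ)
    (hFmono : ∀ i, MonotoneOn (F i) (Set.Icc 0 1))
    (hFrange : ∀ i, ∀ t ∈ Set.Icc (0 : ℝ) 1, F i t ∈ Set.Icc (0 : ℝ) 1)
    (hF0 : ∀ i, F i 0 = 0) (hF1 : ∀ i, F i 1 = 1)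
    (hnull : ∀ i ∈ H0, ∀ t ∈ Set.Icc (0 : ℝ) 1,
      P {ω | p i ω ≤ t} ≤ ENNReal.ofReal (F i t))
    (A : Finset ℝ) (hA0 : (0 : ℝ) ∈ A) (hA : ∀ t ∈ A, t ∈ Set.Icc (0 : ℝ) 1)
    (hpA : ∀ i, ∀ᵐ ω ∂P, p i ω ∈ A)
    (α : ℝ) (hα : α ∈ Set.Ioo (0 : ℝ) 1)
    (τ : ℕ → ℝ) (hτ0 : τ 0 = 0)
    (hτk : ∀ k, 1 ≤ k → k ≤ m → IsGreatest {t : ℝ | t ∈ A ∧ (∀ i, F i t < 1) ∧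
      ∀ S : Finset (Fin m), S.card = m - k + 1 →
        ∑ i ∈ S, F i t / (1 - F i t) ≤ α * k} (τ k))
    :
    ∫ ω, FDP m H0 (rejSD m τ (fun j => p j ω)) ∂P ≤ α :=
  fdr_A_DBH_SD_le_alpha_general P m p hmeas hindep H0 F hFrange hF0 hnull A hA0 hA α hα τ hτ0 hτk
end

section
/- Define the Heyse critical values by τ_k = max{t ∈ A : F̄(t) ≤ αk/m} for 1 ≤ k ≤ m, where F̄(t) = (1/m)·Σ_{i=1}^m F_i(t), and the Benjamini–Hochberg critical values by ξ_k = αk/m for 1 ≤ k ≤ m. Then the rejection set of the step-up procedure SU(τ) (the Heyse procedure) contains the rejection set of the step-up procedure SU(ξ) (the BH procedure). -/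
open MeasureTheory ProbabilityTheory Finset

/-- the Heyse procedure rejects at least as much as Benjamini-Hochberg. -/
theorem heyse_rejects_more_than_BH
    (m : ℕ) (hm : 1 ≤ m) (α : ℝ) (hα : α ∈ Set.Ioo (0 : ℝ) 1)
    (A : Finset ℝ) (hA0 : (0 : ℝ) ∈ A) (hA : ∀ t ∈ A, t ∈ Set.Icc (0 : ℝ) 1)
    (p : Fin m → ℝ) (hp : ∀ i, p i ∈ A)
    (F : Fin m → ℝ → ℝ)
    (hFmono : ∀ i, MonotoneOn (F i) (Set.Icc 0 1))
    (hFrange : ∀ i, ∀ t ∈ Set.Icc (0 : ℝ) 1, F i t ∈ Set.Icc (0 : ℝ) 1)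
    (hF0 : ∀ i, F i 0 = 0) (hF1 : ∀ i, F i 1 = 1)
    (hFsup : ∀ i, ∀ t ∈ Set.Icc (0 : ℝ) 1, F i t ≤ t)
    (τ : ℕ → ℝ) (hτ0 : τ 0 = 0)
    (hτk : ∀ k, 1 ≤ k → k ≤ m → IsGreatest {t : ℝ | t ∈ A ∧
      (1 / (m : ℝ)) * ∑ i : Fin m, F i t ≤ α * k / m} (τ k)) :
    rejSU m (fun k => α * k / m) p ⊆ rejSU m τ p := by
  have hm' : (0 : ℝ) < m := by exact_mod_cast hm
  -- key: any t ∈ A with t ≤ αk/m satisfies t ≤ τ k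
  have key : ∀ t ∈ A, ∀ k, 1 ≤ k → k ≤ m → t ≤ α * k / m → t ≤ τ k := by
    intro t htA k hk1 hkm htk
    refine (hτk k hk1 hkm).2 ⟨htA, ?_⟩
    have hsum : ∑ i : Fin m, F i t ≤ ∑ _i : Fin m, t :=
      Finset.sum_le_sum fun i _ => hFsup i t (hA t htA)
    calc (1 / (m : ℝ)) * ∑ i : Fin m, F i t ≤ (1 / m) * ∑ _i : Fin m, t := by
          apply mul_le_mul_of_nonneg_left hsum; positivity
      _ = t := by
          simp [Finset.sum_const, Finset.card_univ]
          field_simp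
      _ ≤ α * k / m := htk
  have hτnonneg : ∀ k, k ≤ m → 0 ≤ τ k := by
    intro k hk
    rcases Nat.eq_zero_or_pos k with h | h
    · simp [h, hτ0]
    · refine (hτk k h hk).2 ⟨hA0, ?_⟩
      simp only [hF0, Finset.sum_const_zero, mul_zero]
      have hα0 : (0:ℝ) < α := hα.1
      positivity
  have hτmono : ∀ k k', 1 ≤ k → k ≤ k' → k' ≤ m → τ k ≤ τ k' := by
    intro k k' hk hkk hk'
    refine (hτk k' (hk.trans hkk) hk').2 ⟨(hτk k hk (hkk.trans hk')).1.1, ?_⟩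
    refine le_trans (hτk k hk (hkk.trans hk')).1.2 ?_
    have hkc : (k:ℝ) ≤ k' := by exact_mod_cast hkk
    have hα0 : (0:ℝ) ≤ α := le_of_lt hα.1
    gcongr
  set ξ : ℕ → ℝ := fun k => α * k / m with hξdef
  set N := numRejSU m ξ p with hN
  set N' := numRejSU m τ p with hN'
  have hSξ : N ∈ {k | k ≤ m ∧ k ≤ (univ.filter (fun j => p j ≤ ξ k)).card} := by
    rw [hN, numRejSU]
    exact Nat.sSup_mem ⟨0, by simp⟩ ⟨m, fun k hk => hk.1⟩
  have hSτ : N' ∈ {k | k ≤ m ∧ k ≤ (univ.filter (fun j => p j ≤ τ k)).card} := by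
    rw [hN', numRejSU]
    exact Nat.sSup_mem ⟨0, by simp⟩ ⟨m, fun k hk => hk.1⟩
  have hNle : N ≤ N' := by
    rcases Nat.eq_zero_or_pos N with h | h
    · omega
    · have hsub : (univ.filter (fun j => p j ≤ ξ N)) ⊆
          (univ.filter (fun j => p j ≤ τ N)) := by
        intro j hj
        simp only [mem_filter, mem_univ, true_and] at hj ⊢
        exact key (p j) (hp j) N h hSξ.1 hj
      have : N ∈ {k | k ≤ m ∧ k ≤ (univ.filter (fun j => p j ≤ τ k)).card} :=
        ⟨hSξ.1, le_trans hSξ.2 (Finset.card_le_card hsub)⟩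
      exact le_csSup ⟨m, fun k hk => hk.1⟩ this
  intro i hi
  simp only [rejSU, mem_filter, mem_univ, true_and] at hi ⊢
  rcases Nat.eq_zero_or_pos N with h | h
  · have hξ0 : ξ 0 = 0 := by simp [hξdef]
    have : p i ≤ 0 := by rw [← hξ0, ← h]; exact hi
    exact this.trans (hτnonneg N' hSτ.1)
  · have h1 : p i ≤ τ N := key (p i) (hp i) N h hSξ.1 hi
    exact h1.trans (hτmono N N' h hNle hSτ.1)
end

section
/- Define the [DBH-SU] critical values by τ_m = max{t ∈ A : F_i(t) < 1 for all i, and (1/m)·Σ_{i=1}^m F_i(t)/(1−F_i(t)) ≤ α} and, for 1 ≤ k ≤ m−1, τ_k = max{t ∈ A : t ≤ τ_m and (1/m)·Σ_{i=1}^m F_i(t)/(1−F_i(τ_m)) ≤ αk/m}. Then the rejection set of the step-up procedure SU(τ) contains the rejection set of the step-up procedure with the Benjamini–Hochberg critical values at level α/(1+α), i.e. ξ_k = (α/(1+α))·k/m for 1 ≤ k ≤ m. -/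
open MeasureTheory ProbabilityTheory Finset

/-!
Comparing step-up procedures only needs, at every rank `k`, that each p-value below the BH
value `ξ_k = α k / ((1 + α) m)` lies below `τ_k`: then BH's rejection count is admissible
for `SU(τ)`, and a p-value rejected by BH sits below `ξ_{k̂} ≤ ξ_{k̂'}`, hence below `τ_{k̂'}`.
For a grid point `t ≤ ξ_k`, super-uniformity gives `F_i(t) ≤ t ≤ α/(1+α)`, i.e. every odds
`F_i(t)/(1 - F_i(t))` is at most `α`, so `t ≤ τ_m`; and since
`∑ 1/(1 - F_i(τ_m)) = m + ∑ F_i(τ_m)/(1 - F_i(τ_m)) ≤ m (1 + α)`, the average defining `τ_k`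
is at most `t (1 + α) ≤ α k / m`.
-/

section StepUp

variable {m : ℕ} {q : Fin m → ℝ}

lemma numRejSU_mem (τ : ℕ → ℝ) (q : Fin m → ℝ) :
    numRejSU m τ q ≤ m ∧
      numRejSU m τ q ≤ (univ.filter (fun j => q j ≤ τ (numRejSU m τ q))).card :=
  Nat.sSup_mem (s := {k | k ≤ m ∧ k ≤ (univ.filter (fun j => q j ≤ τ k)).card})
    ⟨0, by simp⟩ ⟨m, fun _ hk => hk.1⟩

lemma le_numRejSU {τ : ℕ → ℝ} {k : ℕ} (hkm : k ≤ m)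
    (hk : k ≤ (univ.filter (fun j => q j ≤ τ k)).card) : k ≤ numRejSU m τ q :=
  le_csSup ⟨m, fun _ hk => hk.1⟩ ⟨hkm, hk⟩

theorem rejSU_subset_rejSU {ξ τ : ℕ → ℝ} (hξ : Monotone ξ)
    (hξτ : ∀ k ≤ m, ∀ j, q j ≤ ξ k → q j ≤ τ k) : rejSU m ξ q ⊆ rejSU m τ q := by
  obtain ⟨hKm, hK⟩ := numRejSU_mem ξ q
  have hKK' : numRejSU m ξ q ≤ numRejSU m τ q := by
    refine le_numRejSU hKm (hK.trans (card_le_card fun j hj => ?_))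
    simp only [mem_filter, mem_univ, true_and] at hj ⊢
    exact hξτ _ hKm j hj
  intro i hi
  simp only [rejSU, mem_filter, mem_univ, true_and] at hi ⊢
  exact hξτ _ (numRejSU_mem τ q).1 i (hi.trans (hξ hKK'))

end StepUp

lemma div_one_sub_le_of_le_div_one_add {x α : ℝ} (hα : 0 ≤ α) (hx : x ≤ α / (1 + α)) :
    x / (1 - x) ≤ α := by
  have h1α : 0 < 1 + α := by linarith
  rw [le_div_iff₀ h1α] at hx
  rw [div_le_iff₀ (by nlinarith)]
  linarith

lemma one_div_one_sub_eq {x : ℝ} (hx : x < 1) : 1 / (1 - x) = 1 + x / (1 - x) := by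
  field_simp [(sub_pos.2 hx).ne']
  ring

/-- The [DBH-SU] critical value `τ_m` is the maximum of `dbhTopSet m α A F`, and `τ_k`, for
`1 ≤ k < m`, the maximum of `dbhSet m α A F τ_m k`. -/
def dbhTopSet (m : ℕ) (α : ℝ) (A : Finset ℝ) (F : Fin m → ℝ → ℝ) : Set ℝ :=
  {t | t ∈ A ∧ (∀ i, F i t < 1) ∧ (1 / (m : ℝ)) * ∑ i : Fin m, F i t / (1 - F i t) ≤ α}

def dbhSet (m : ℕ) (α : ℝ) (A : Finset ℝ) (F : Fin m → ℝ → ℝ) (T : ℝ) (k : ℕ) : Set ℝ :=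
  {t | t ∈ A ∧ t ≤ T ∧ (1 / (m : ℝ)) * ∑ i : Fin m, F i t / (1 - F i T) ≤ α * k / m}

section DBH

variable {m : ℕ} {α : ℝ} {A : Finset ℝ} {F : Fin m → ℝ → ℝ}

lemma mem_dbhTopSet {t : ℝ} (hα : 0 ≤ α) (hm : 0 < m) (ht : t ∈ A) (hF : ∀ i, F i t ≤ t)
    (hts : t ≤ α / (1 + α)) : t ∈ dbhTopSet m α A F := by
  have hm' : (0 : ℝ) < m := by exact_mod_cast hm
  have hlt : α / (1 + α) < 1 := by rw [div_lt_one (by linarith)]; linarith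
  refine ⟨ht, fun i => (hF i).trans_lt (hts.trans_lt hlt), ?_⟩
  have hodds : ∑ i : Fin m, F i t / (1 - F i t) ≤ m * α := by
    simpa using sum_le_card_nsmul univ _ α fun i _ =>
      div_one_sub_le_of_le_div_one_add hα ((hF i).trans hts)
  calc (1 / (m : ℝ)) * ∑ i : Fin m, F i t / (1 - F i t) ≤ (1 / m) * (m * α) :=
        mul_le_mul_of_nonneg_left hodds (by positivity)
    _ = α := by field_simp

lemma sum_one_div_one_sub_le {T : ℝ} (hT : T ∈ dbhTopSet m α A F) (hm : 0 < m) :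
    ∑ i : Fin m, 1 / (1 - F i T) ≤ m * (1 + α) := by
  obtain ⟨-, hT1, hTavg⟩ := hT
  have hm' : (0 : ℝ) < m := by exact_mod_cast hm
  rw [one_div_mul_eq_div, div_le_iff₀ hm'] at hTavg
  rw [sum_congr rfl fun i _ => one_div_one_sub_eq (hT1 i), sum_add_distrib]
  simp only [sum_const, card_univ, Fintype.card_fin, nsmul_eq_mul, mul_one]
  linarith

lemma mem_dbhSet {T t : ℝ} {k : ℕ} (hα : 0 ≤ α) (hT : T ∈ dbhTopSet m α A F) (hm : 0 < m)
    (ht : t ∈ A) (ht0 : 0 ≤ t) (htT : t ≤ T) (hF : ∀ i, F i t ≤ t)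
    (hts : t ≤ α / (1 + α) * k / m) : t ∈ dbhSet m α A F T k := by
  have hm' : (0 : ℝ) < m := by exact_mod_cast hm
  have hden : ∀ i, 0 < 1 - F i T := fun i => sub_pos.2 (hT.2.1 i)
  refine ⟨ht, htT, ?_⟩
  have hsum : ∑ i : Fin m, F i t / (1 - F i T) ≤ t * ∑ i : Fin m, 1 / (1 - F i T) := by
    simp only [mul_sum, mul_one_div]
    exact sum_le_sum fun i _ => div_le_div_of_nonneg_right (hF i) (hden i).le
  calc (1 / (m : ℝ)) * ∑ i : Fin m, F i t / (1 - F i T)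
      ≤ (1 / m) * (t * ∑ i : Fin m, 1 / (1 - F i T)) := by gcongr
    _ ≤ (1 / m) * (t * (m * (1 + α))) := by gcongr; exact sum_one_div_one_sub_le hT hm
    _ = t * (1 + α) := by field_simp
    _ ≤ α / (1 + α) * k / m * (1 + α) := by gcongr
    _ = α * k / m := by field_simp

theorem le_dbhCrit_of_le_bhCrit (hα : 0 ≤ α) (hA : ∀ t ∈ A, 0 ≤ t)
    (hF : ∀ i, ∀ t ∈ A, F i t ≤ t)
    {τ : ℕ → ℝ} (hτ0 : τ 0 = 0) (hτm : IsGreatest (dbhTopSet m α A F) (τ m))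
    (hτk : ∀ k, 1 ≤ k → k < m → IsGreatest (dbhSet m α A F (τ m) k) (τ k))
    {k : ℕ} (hkm : k ≤ m) {t : ℝ} (ht : t ∈ A) (hts : t ≤ α / (1 + α) * k / m) :
    t ≤ τ k := by
  rcases Nat.eq_zero_or_pos k with rfl | hk
  · simpa [hτ0] using hts
  have hm : 0 < m := hk.trans_le hkm
  have hts' : t ≤ α / (1 + α) := by
    refine hts.trans ?_
    rw [mul_div_assoc]
    exact mul_le_of_le_one_right (by positivity)
      (div_le_one_of_le₀ (by exact_mod_cast hkm) (Nat.cast_nonneg m))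
  have htm : t ≤ τ m := hτm.2 (mem_dbhTopSet hα hm ht (fun i => hF i t ht) hts')
  rcases hkm.eq_or_lt with rfl | hkm
  · exact htm
  · exact (hτk k hk hkm).2 (mem_dbhSet hα hτm.1 hm ht (hA t ht) htm (fun i => hF i t ht) hts)

end DBH

theorem DBH_SU_rejects_more_than_BH_shrunk_general
    (m : ℕ) (α : ℝ) (hα : α ∈ Set.Ioo (0 : ℝ) 1)
    (A : Finset ℝ) (hA : ∀ t ∈ A, t ∈ Set.Icc (0 : ℝ) 1)
    (p : Fin m → ℝ) (hp : ∀ i, p i ∈ A)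
    (F : Fin m → ℝ → ℝ)
    (hFsup : ∀ i, ∀ t ∈ Set.Icc (0 : ℝ) 1, F i t ≤ t)
    (τ : ℕ → ℝ) (hτ0 : τ 0 = 0)
    (hτm : IsGreatest {t : ℝ | t ∈ A ∧ (∀ i, F i t < 1) ∧
      (1 / (m : ℝ)) * ∑ i : Fin m, F i t / (1 - F i t) ≤ α} (τ m))
    (hτk : ∀ k, 1 ≤ k → k < m → IsGreatest {t : ℝ | t ∈ A ∧ t ≤ τ m ∧
      (1 / (m : ℝ)) * ∑ i : Fin m, F i t / (1 - F i (τ m)) ≤ α * k / m} (τ k))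
    :
    rejSU m (fun k => (α / (1 + α)) * k / m) p ⊆ rejSU m τ p := by
  have hα0 : 0 ≤ α := hα.1.le
  have hBH_mono : Monotone fun k : ℕ => α / (1 + α) * k / m := fun k l hkl => by
    dsimp only
    gcongr
  exact rejSU_subset_rejSU hBH_mono fun k hkm j hj =>
    le_dbhCrit_of_le_bhCrit hα0 (fun t ht => (hA t ht).1) (fun i t ht => hFsup i t (hA t ht))
      hτ0 hτm hτk hkm (hp j) hj

/-- [DBH-SU] rejects at least as much as BH at level `α/(1+α)`. -/
theorem DBH_SU_rejects_more_than_BH_shrunk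
    (m : ℕ) (hm : 1 ≤ m) (α : ℝ) (hα : α ∈ Set.Ioo (0 : ℝ) 1)
    (A : Finset ℝ) (hA0 : (0 : ℝ) ∈ A) (hA : ∀ t ∈ A, t ∈ Set.Icc (0 : ℝ) 1)
    (p : Fin m → ℝ) (hp : ∀ i, p i ∈ A)
    (F : Fin m → ℝ → ℝ)
    (hFmono : ∀ i, MonotoneOn (F i) (Set.Icc 0 1))
    (hFrange : ∀ i, ∀ t ∈ Set.Icc (0 : ℝ) 1, F i t ∈ Set.Icc (0 : ℝ) 1)
    (hF0 : ∀ i, F i 0 = 0) (hF1 : ∀ i, F i 1 = 1)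
    (hFsup : ∀ i, ∀ t ∈ Set.Icc (0 : ℝ) 1, F i t ≤ t)
    (τ : ℕ → ℝ) (hτ0 : τ 0 = 0)
    (hτm : IsGreatest {t : ℝ | t ∈ A ∧ (∀ i, F i t < 1) ∧
      (1 / (m : ℝ)) * ∑ i : Fin m, F i t / (1 - F i t) ≤ α} (τ m))
    (hτk : ∀ k, 1 ≤ k → k < m → IsGreatest {t : ℝ | t ∈ A ∧ t ≤ τ m ∧
      (1 / (m : ℝ)) * ∑ i : Fin m, F i t / (1 - F i (τ m)) ≤ α * k / m} (τ k))
    :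
    rejSU m (fun k => (α / (1 + α)) * k / m) p ⊆ rejSU m τ p :=
  DBH_SU_rejects_more_than_BH_shrunk_general m α hα A hA p hp F hFsup τ hτ0 hτm hτk
end

section
/- Define the [DBH-SD] critical values by τ_k = max{t ∈ A : F_i(t) < 1 for all i, and (1/m)·Σ_{i=1}^m F_i(t)/(1−F_i(t)) ≤ αk/m} for 1 ≤ k ≤ m. Then the rejection set of the step-down procedure SD(τ) contains the rejection set of the step-down procedure with critical values ξ_k = (αk/m)/(1+αk/m) for 1 ≤ k ≤ m. -/
open MeasureTheory ProbabilityTheory Finset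

/-- [DBH-SD] rejects at least as much as the step-down procedure with
critical values `(αk/m)/(1+αk/m)`. -/
theorem DBH_SD_rejects_more_than_shrunk_SD
    (m : ℕ) (hm : 1 ≤ m) (α : ℝ) (hα : α ∈ Set.Ioo (0 : ℝ) 1)
    (A : Finset ℝ) (hA0 : (0 : ℝ) ∈ A) (hA : ∀ t ∈ A, t ∈ Set.Icc (0 : ℝ) 1)
    (p : Fin m → ℝ) (hp : ∀ i, p i ∈ A)
    (F : Fin m → ℝ → ℝ)
    (hFmono : ∀ i, MonotoneOn (F i) (Set.Icc 0 1))
    (hFrange : ∀ i, ∀ t ∈ Set.Icc (0 : ℝ) 1, F i t ∈ Set.Icc (0 : ℝ) 1)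
    (hF0 : ∀ i, F i 0 = 0) (hF1 : ∀ i, F i 1 = 1)
    (hFsup : ∀ i, ∀ t ∈ Set.Icc (0 : ℝ) 1, F i t ≤ t)
    (τ : ℕ → ℝ) (hτ0 : τ 0 = 0)
    (hτk : ∀ k, 1 ≤ k → k ≤ m → IsGreatest {t : ℝ | t ∈ A ∧ (∀ i, F i t < 1) ∧
      (1 / (m : ℝ)) * ∑ i : Fin m, F i t / (1 - F i t) ≤ α * k / m} (τ k))
    :
    rejSD m (fun k => (α * k / m) / (1 + α * k / m)) p ⊆ rejSD m τ p := by
  obtain ⟨hα0, hα1⟩ := hα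
  have hm0 : (0:ℝ) < m := by exact_mod_cast hm
  set ξ : ℕ → ℝ := fun k => (α * k / m) / (1 + α * k / m) with hξdef
  -- key: any t ∈ A with t ≤ ξ k belongs to the τ-set, hence t ≤ τ k
  have key : ∀ k, 1 ≤ k → k ≤ m → ∀ t ∈ A, t ≤ ξ k → t ≤ τ k := by
    intro k hk1 hkm t htA htξ
    have hk0 : (0:ℝ) < k := by exact_mod_cast hk1
    have hx : (0:ℝ) < α * k / m := by positivity
    set x : ℝ := α * k / m with hxdef
    have h1x : (0:ℝ) < 1 + x := by linarith
    have hξlt1 : ξ k < 1 := by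
      show x / (1 + x) < 1
      rw [div_lt_one h1x]; linarith
    obtain ⟨ht0, ht1⟩ := hA t htA
    have htlt1 : t < 1 := lt_of_le_of_lt htξ hξlt1
    have htx : t * (1 + x) ≤ x := by
      have := htξ
      rw [hξdef] at this
      simp only at this
      calc t * (1 + x) ≤ (x / (1 + x)) * (1 + x) := by
            apply mul_le_mul_of_nonneg_right this (le_of_lt h1x)
        _ = x := by field_simp
    have hFlt1 : ∀ i, F i t < 1 := fun i =>
      lt_of_le_of_lt (hFsup i t ⟨ht0, ht1⟩) htlt1
    have hratio : ∀ i, F i t / (1 - F i t) ≤ x := by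
      intro i
      have hF1i := hFlt1 i
      have hFle : F i t ≤ t := hFsup i t ⟨ht0, ht1⟩
      have hF0i : 0 ≤ F i t := (hFrange i t ⟨ht0, ht1⟩).1
      rw [div_le_iff₀ (by linarith)]
      nlinarith
    have hsum : (1 / (m : ℝ)) * ∑ i : Fin m, F i t / (1 - F i t) ≤ α * k / m := by
      have : ∑ i : Fin m, F i t / (1 - F i t) ≤ ∑ _i : Fin m, x :=
        Finset.sum_le_sum (fun i _ => hratio i)
      simp only [Finset.sum_const, Finset.card_univ, Fintype.card_fin, nsmul_eq_mul] at this
      rw [one_div, inv_mul_le_iff₀ hm0]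
      nlinarith [this]
    exact (hτk k hk1 hkm).2 ⟨htA, hFlt1, hsum⟩
  -- τ is nonnegative
  have hτnn : ∀ k, k ≤ m → 0 ≤ τ k := by
    intro k hkm
    rcases Nat.eq_zero_or_pos k with h | h
    · rw [h, hτ0]
    · refine (hτk k h hkm).2 ⟨hA0, fun i => by rw [hF0]; norm_num, ?_⟩
      have : ∀ i : Fin m, F i 0 / (1 - F i 0) = 0 := fun i => by rw [hF0]; norm_num
      rw [Finset.sum_congr rfl (fun i _ => this i)]
      simp
      positivity
  -- τ is monotone on [1, m]
  have hτmono : ∀ j k, 1 ≤ j → j ≤ k → k ≤ m → τ j ≤ τ k := by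
    intro j k hj1 hjk hkm
    obtain ⟨hmem, _⟩ := hτk j hj1 (le_trans hjk hkm)
    refine (hτk k (le_trans hj1 hjk) hkm).2 ⟨hmem.1, hmem.2.1, le_trans hmem.2.2 ?_⟩
    have hjk' : (j:ℝ) ≤ k := by exact_mod_cast hjk
    rw [div_le_div_iff₀ hm0 hm0]
    nlinarith [mul_le_mul_of_nonneg_right (mul_le_mul_of_nonneg_left hjk' hα0.le) hm0.le]
  -- card comparison
  have hcard : ∀ k, 1 ≤ k → k ≤ m →
      (univ.filter (fun j => p j ≤ ξ k)).card ≤ (univ.filter (fun j => p j ≤ τ k)).card := by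
    intro k hk1 hkm
    apply Finset.card_le_card
    intro j hj
    rw [Finset.mem_filter] at hj ⊢
    exact ⟨hj.1, key k hk1 hkm (p j) (hp j) hj.2⟩
  -- membership facts for numRejSD
  have hzero_mem : ∀ σ : ℕ → ℝ,
      0 ∈ {k | k ≤ m ∧ ∀ k' ≤ k, k' ≤ (univ.filter (fun j => p j ≤ σ k')).card} := by
    intro σ
    exact ⟨Nat.zero_le m, fun k' hk' => by omega⟩
  have hbdd : ∀ σ : ℕ → ℝ,
      BddAbove {k | k ≤ m ∧ ∀ k' ≤ k, k' ≤ (univ.filter (fun j => p j ≤ σ k')).card} :=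
    fun σ => ⟨m, fun k hk => hk.1⟩
  set n := numRejSD m ξ p with hn
  set N := numRejSD m τ p with hN
  have hnmem : n ∈ {k | k ≤ m ∧ ∀ k' ≤ k, k' ≤ (univ.filter (fun j => p j ≤ ξ k')).card} :=
    Nat.sSup_mem ⟨0, hzero_mem ξ⟩ (hbdd ξ)
  have hnτ : n ∈ {k | k ≤ m ∧ ∀ k' ≤ k, k' ≤ (univ.filter (fun j => p j ≤ τ k')).card} := by
    refine ⟨hnmem.1, fun k' hk' => ?_⟩
    rcases Nat.eq_zero_or_pos k' with h | h
    · omega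
    · exact le_trans (hnmem.2 k' hk') (hcard k' h (le_trans hk' hnmem.1))
  have hnN : n ≤ N := le_csSup (hbdd τ) hnτ
  have hNmem : N ∈ {k | k ≤ m ∧ ∀ k' ≤ k, k' ≤ (univ.filter (fun j => p j ≤ τ k')).card} :=
    Nat.sSup_mem ⟨0, hzero_mem τ⟩ (hbdd τ)
  -- conclude
  intro i hi
  rw [rejSD, Finset.mem_filter] at hi ⊢
  refine ⟨Finset.mem_univ i, ?_⟩
  have hpi : p i ≤ ξ n := hi.2
  rcases Nat.eq_zero_or_pos n with h | h
  · have : ξ 0 = 0 := by simp [hξdef]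
    rw [h, this] at hpi
    exact le_trans hpi (hτnn N hNmem.1)
  · have h1 : p i ≤ τ n := key n h hnmem.1 (p i) (hp i) hpi
    rcases Nat.eq_or_lt_of_le hnN with heq | hlt
    · rwa [heq] at h1
    · exact le_trans h1 (hτmono n N h hnN hNmem.1)
end

section
/- Define the [A-DBH-SU] critical values by τ_m = max{t ∈ A : F_i(t) < 1 for all i, and (1/m)·Σ_{i=1}^m F_i(t)/(1−F_i(t)) ≤ α} and, for 1 ≤ k ≤ m−1, τ_k = max{t ∈ A : t ≤ τ_m and for every subset S ⊆ {1,…,m} with |S| = m−k+1, Σ_{i∈S} F_i(t)/(1−F_i(τ_m)) ≤ αk}. Setting λ = τ_m, the rejection set of the step-up procedure SU(τ) contains the rejection set of the step-up procedure with the Blanchard–Roquain critical values ξ_k = min((1−λ)·αk/(m−k+1), λ) for 1 ≤ k ≤ m. -/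
open MeasureTheory ProbabilityTheory Finset

/-- [A-DBH-SU] rejects at least as much as the Blanchard-Roquain
procedure with `λ = τ m`. -/
theorem A_DBH_SU_rejects_more_than_BR
    (m : ℕ) (hm : 1 ≤ m) (α : ℝ) (hα : α ∈ Set.Ioo (0 : ℝ) 1)
    (A : Finset ℝ) (hA0 : (0 : ℝ) ∈ A) (hA : ∀ t ∈ A, t ∈ Set.Icc (0 : ℝ) 1)
    (p : Fin m → ℝ) (hp : ∀ i, p i ∈ A)
    (F : Fin m → ℝ → ℝ)
    (hFmono : ∀ i, MonotoneOn (F i) (Set.Icc 0 1))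
    (hFrange : ∀ i, ∀ t ∈ Set.Icc (0 : ℝ) 1, F i t ∈ Set.Icc (0 : ℝ) 1)
    (hF0 : ∀ i, F i 0 = 0) (hF1 : ∀ i, F i 1 = 1)
    (hFsup : ∀ i, ∀ t ∈ Set.Icc (0 : ℝ) 1, F i t ≤ t)
    (τ : ℕ → ℝ) (hτ0 : τ 0 = 0)
    (hτm : IsGreatest {t : ℝ | t ∈ A ∧ (∀ i, F i t < 1) ∧
      (1 / (m : ℝ)) * ∑ i : Fin m, F i t / (1 - F i t) ≤ α} (τ m))
    (hτk : ∀ k, 1 ≤ k → k < m → IsGreatest {t : ℝ | t ∈ A ∧ t ≤ τ m ∧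
      ∀ S : Finset (Fin m), S.card = m - k + 1 →
        ∑ i ∈ S, F i t / (1 - F i (τ m)) ≤ α * k} (τ k))
    :
    rejSU m (fun k => min ((1 - τ m) * (α * k) / ((m : ℝ) - k + 1)) (τ m)) p
      ⊆ rejSU m τ p := by
  classical
  set lam := τ m with hlam
  -- basic facts about lam
  have hlamA : lam ∈ A := hτm.1.1
  have hFlam : ∀ i, F i lam < 1 := hτm.1.2.1
  have h0mem : (0:ℝ) ∈ {t : ℝ | t ∈ A ∧ (∀ i, F i t < 1) ∧
      (1 / (m : ℝ)) * ∑ i : Fin m, F i t / (1 - F i t) ≤ α} := by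
    refine ⟨hA0, fun i => by rw [hF0]; norm_num, ?_⟩
    simp [hF0]
    exact le_of_lt hα.1
  have hlam0 : 0 ≤ lam := hτm.2 h0mem
  have hlam1' : lam ≤ 1 := (hA lam hlamA).2
  have hlam1 : lam < 1 := by
    rcases lt_or_eq_of_le hlam1' with h | h
    · exact h
    · exfalso
      have := hFlam ⟨0, hm⟩
      rw [h, hF1] at this
      exact lt_irrefl _ this
  have hdenom : ∀ i, 0 < 1 - F i lam := fun i => by linarith [hFlam i]
  have hlamIcc : lam ∈ Set.Icc (0:ℝ) 1 := ⟨hlam0, hlam1'⟩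
  have hFlamlb : ∀ i, 1 - lam ≤ 1 - F i lam := fun i => by
    have := hFsup i lam hlamIcc; linarith
  set ξ : ℕ → ℝ := fun k => min ((1 - lam) * (α * k) / ((m : ℝ) - k + 1)) lam with hξ
  -- ξ 0 = 0
  have hξ0 : ξ 0 = 0 := by
    simp [hξ, hlam0]
  -- Key: for t ∈ A, 1 ≤ k ≤ m, t ≤ ξ k → t ≤ τ k
  have keyB : ∀ k, 1 ≤ k → k ≤ m → ∀ t, t ∈ A → t ≤ ξ k → t ≤ τ k := by
    intro k hk1 hkm t htA htξ
    have htIcc : t ∈ Set.Icc (0:ℝ) 1 := hA t htA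
    have hd : (0:ℝ) < (m : ℝ) - k + 1 := by
      have : (k:ℝ) ≤ m := Nat.cast_le.mpr hkm
      linarith
    have htlam : t ≤ lam := le_trans htξ (min_le_right _ _)
    rcases eq_or_lt_of_le hkm with hkeq | hklt
    · subst hkeq; exact htlam
    · refine (hτk k hk1 hklt).2 ⟨htA, htlam, ?_⟩
      intro S hS
      have hterm : ∀ i ∈ S, F i t / (1 - F i lam) ≤ α * k / ((m:ℝ) - k + 1) := by
        intro i _
        have h1 : F i t ≤ (1 - lam) * (α * k) / ((m : ℝ) - k + 1) :=
          le_trans (hFsup i t htIcc) (le_trans htξ (min_le_left _ _))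
        have hnn : (0:ℝ) ≤ (1 - lam) * (α * k) / ((m : ℝ) - k + 1) :=
          div_nonneg (mul_nonneg (by linarith) (mul_nonneg (le_of_lt hα.1) (Nat.cast_nonneg _)))
            (le_of_lt hd)
        have h2 : F i t / (1 - F i lam) ≤ ((1 - lam) * (α * k) / ((m : ℝ) - k + 1)) / (1 - lam) :=
          div_le_div₀ hnn h1 (by linarith) (hFlamlb i)
        have h3 : ((1 - lam) * (α * k) / ((m : ℝ) - k + 1)) / (1 - lam)
            = α * k / ((m:ℝ) - k + 1) := by
          rw [mul_div_assoc]
          exact mul_div_cancel_left₀ _ (by linarith)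
        linarith
      calc ∑ i ∈ S, F i t / (1 - F i lam)
          ≤ ∑ _i ∈ S, α * k / ((m:ℝ) - k + 1) := Finset.sum_le_sum hterm
        _ = (S.card : ℝ) * (α * k / ((m:ℝ) - k + 1)) := by
            rw [Finset.sum_const, nsmul_eq_mul]
        _ = α * k := by
            rw [hS]
            have : ((m - k + 1 : ℕ) : ℝ) = (m:ℝ) - k + 1 := by
              push_cast [Nat.cast_sub (le_of_lt hklt)]
              ring
            rw [this, mul_comm, div_mul_cancel₀ _ (ne_of_gt hd)]
      -- done
  -- 0 ≤ τ 1
  have hτ1 : 0 ≤ τ 1 := by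
    rcases eq_or_lt_of_le hm with h1 | h1
    · have e : τ 1 = lam := by rw [hlam, h1]
      rw [e]; exact hlam0
    · refine (hτk 1 le_rfl h1).2 ⟨hA0, hlam0, ?_⟩
      intro S hS
      have : ∀ i ∈ S, F i (0:ℝ) / (1 - F i lam) = 0 := by
        intro i _; rw [hF0]; simp
      rw [Finset.sum_congr rfl this, Finset.sum_const_zero]
      simpa using le_of_lt hα.1
  -- τ is monotone up to m
  have hstep : ∀ k, k + 1 ≤ m → τ k ≤ τ (k + 1) := by
    intro k hk
    rcases Nat.eq_zero_or_pos k with hk0 | hk1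
    · subst hk0; rw [hτ0]; exact hτ1
    · have hkm : k < m := hk
      have hmem := (hτk k hk1 hkm).1
      rcases eq_or_lt_of_le hk with hkeq | hklt
      · rw [hkeq]; exact hmem.2.1
      · refine (hτk (k+1) (by omega) hklt).2 ⟨hmem.1, hmem.2.1, ?_⟩
        intro S hS
        have hScard : S.card ≤ m - k + 1 := by omega
        have hcard_univ : m - k + 1 ≤ (Finset.univ : Finset (Fin m)).card := by
          rw [Finset.card_univ, Fintype.card_fin]; omega
        obtain ⟨T, hST, _, hT⟩ := Finset.exists_subsuperset_card_eq
          (Finset.subset_univ S) hScard hcard_univ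
        have hτkIcc : τ k ∈ Set.Icc (0:ℝ) 1 := hA _ hmem.1
        have hsum1 : ∑ i ∈ S, F i (τ k) / (1 - F i lam)
            ≤ ∑ i ∈ T, F i (τ k) / (1 - F i lam) := by
          apply Finset.sum_le_sum_of_subset_of_nonneg hST
          intro i _ _
          apply div_nonneg (hFrange i _ hτkIcc).1 (le_of_lt (hdenom i))
        have hsum2 : ∑ i ∈ T, F i (τ k) / (1 - F i lam) ≤ α * k := hmem.2.2 T hT
        have : α * (k:ℝ) ≤ α * ((k:ℝ) + 1) := by nlinarith [hα.1]
        push_cast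
        linarith
  have hmono : ∀ l, l ≤ m → ∀ k, k ≤ l → τ k ≤ τ l := by
    intro l
    induction l with
    | zero =>
      intro _ k hk
      rw [Nat.le_zero.mp hk]
    | succ n ih =>
      intro hn k hk
      rcases Nat.eq_or_lt_of_le hk with h | h
      · rw [h]
      · exact le_trans (ih (by omega) k (by omega)) (hstep n hn)
  -- numRejSU facts
  have hnonempty : ∀ σ : ℕ → ℝ, (0:ℕ) ∈ {k | k ≤ m ∧ k ≤ (univ.filter (fun j => p j ≤ σ k)).card} :=
    fun σ => ⟨Nat.zero_le m, Nat.zero_le _⟩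
  have hbdd : ∀ σ : ℕ → ℝ, BddAbove {k | k ≤ m ∧ k ≤ (univ.filter (fun j => p j ≤ σ k)).card} :=
    fun σ => ⟨m, fun k hk => hk.1⟩
  have hlem : ∀ σ : ℕ → ℝ, numRejSU m σ p ≤ m := by
    intro σ
    exact csSup_le ⟨0, hnonempty σ⟩ (fun k hk => hk.1)
  -- the containment of filter sets
  have hfilter : ∀ k ≤ m, (univ.filter (fun j => p j ≤ ξ k)) ⊆ (univ.filter (fun j => p j ≤ τ k)) := by
    intro k hkm j hj
    simp only [Finset.mem_filter, Finset.mem_univ, true_and] at hj ⊢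
    rcases Nat.eq_zero_or_pos k with hk0 | hk1
    · subst hk0; rw [hτ0]; rw [hξ0] at hj; exact hj
    · exact keyB k hk1 hkm (p j) (hp j) hj
  have hnum : numRejSU m ξ p ≤ numRejSU m τ p := by
    apply csSup_le_csSup (hbdd τ) ⟨0, hnonempty ξ⟩
    intro k hk
    exact ⟨hk.1, le_trans hk.2 (Finset.card_le_card (hfilter k hk.1))⟩
  -- conclude
  intro i hi
  simp only [rejSU, Finset.mem_filter, Finset.mem_univ, true_and] at hi ⊢
  have hkξm : numRejSU m ξ p ≤ m := hlem ξ
  have hkτm : numRejSU m τ p ≤ m := hlem τ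
  have h1 : p i ≤ τ (numRejSU m ξ p) := by
    rcases Nat.eq_zero_or_pos (numRejSU m ξ p) with h0 | h1
    · rw [h0, hτ0]; rw [h0, hξ0] at hi; exact hi
    · exact keyB _ h1 hkξm (p i) (hp i) hi
  exact le_trans h1 (hmono _ hkτm _ hnum)
end

section
/- Define the [A-DBH-SD] critical values by τ_k = max{t ∈ A : F_i(t) < 1 for all i, and for every subset S ⊆ {1,…,m} with |S| = m−k+1, Σ_{i∈S} F_i(t)/(1−F_i(t)) ≤ αk} for 1 ≤ k ≤ m. Then the rejection set of the step-down procedure SD(τ) contains the rejection set of the step-down procedure with the Gavrilov–Benjamini–Sarkar critical values ξ_k = αk/(m−(1−α)k+1) for 1 ≤ k ≤ m. -/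
open MeasureTheory ProbabilityTheory Finset

section StepDown

variable {m : ℕ} {q : Fin m → ℝ}

theorem numRejSD_spec (τ : ℕ → ℝ) (q : Fin m → ℝ) :
    numRejSD m τ q ≤ m ∧
      ∀ k' ≤ numRejSD m τ q, k' ≤ (univ.filter (fun j => q j ≤ τ k')).card :=
  Nat.sSup_mem (s := {k | k ≤ m ∧ ∀ k' ≤ k, k' ≤ (univ.filter (fun j => q j ≤ τ k')).card})
    ⟨0, Nat.zero_le m, fun k' hk' => by omega⟩ ⟨m, fun _ hk => hk.1⟩

theorem le_numRejSD {τ : ℕ → ℝ} {k : ℕ} (hk : k ≤ m)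
    (h : ∀ k' ≤ k, k' ≤ (univ.filter (fun j => q j ≤ τ k')).card) :
    k ≤ numRejSD m τ q :=
  le_csSup ⟨m, fun _ hk => hk.1⟩ ⟨hk, h⟩

theorem numRejSD_mono {σ τ : ℕ → ℝ} (h : ∀ k ≤ m, ∀ j, q j ≤ σ k → q j ≤ τ k) :
    numRejSD m σ q ≤ numRejSD m τ q := by
  obtain ⟨hm, hcard⟩ := numRejSD_spec σ q
  refine le_numRejSD hm fun k' hk' => (hcard k' hk').trans (card_le_card fun j => ?_)
  simpa only [mem_filter, mem_univ, true_and] using h k' (hk'.trans hm) j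

theorem rejSD_subset_rejSD {σ τ : ℕ → ℝ} (hσ : MonotoneOn σ (Set.Iic m))
    (h : ∀ k ≤ m, ∀ j, q j ≤ σ k → q j ≤ τ k) :
    rejSD m σ q ⊆ rejSD m τ q := by
  have hN := numRejSD_mono h
  have hM := (numRejSD_spec τ q).1
  intro j
  simp only [rejSD, mem_filter, mem_univ, true_and]
  exact fun hj => h _ hM j (hj.trans (hσ (hN.trans hM) hM hN))

end StepDown

/-- The Gavrilov–Benjamini–Sarkar critical values `ξ_k`. -/
noncomputable def gbsCriticalValue (m : ℕ) (α : ℝ) (k : ℕ) : ℝ :=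
  α * k / ((m : ℝ) - (1 - α) * k + 1)

section GBS

variable {m k : ℕ} {α : ℝ}

theorem gbsCriticalValue_denom_pos (hα : 0 ≤ α) (hk : k ≤ m) :
    0 < (m : ℝ) - (1 - α) * k + 1 := by
  have : (k : ℝ) ≤ m := by exact_mod_cast hk
  nlinarith

theorem gbsCriticalValue_zero : gbsCriticalValue m α 0 = 0 := by
  simp [gbsCriticalValue]

theorem gbsCriticalValue_monotoneOn (hα : 0 ≤ α) :
    MonotoneOn (gbsCriticalValue m α) (Set.Iic m) := by
  intro j hj k hk hjk
  have hjk' : (j : ℝ) ≤ k := by exact_mod_cast hjk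
  rw [gbsCriticalValue, gbsCriticalValue,
    div_le_div_iff₀ (gbsCriticalValue_denom_pos hα hj) (gbsCriticalValue_denom_pos hα hk)]
  nlinarith [mul_nonneg (mul_nonneg hα (sub_nonneg.2 hjk')) (Nat.cast_add_one_pos m).le]

theorem one_sub_gbsCriticalValue (hα : 0 ≤ α) (hk : k ≤ m) :
    1 - gbsCriticalValue m α k = ((m : ℝ) - k + 1) / ((m : ℝ) - (1 - α) * k + 1) := by
  rw [gbsCriticalValue, one_sub_div (gbsCriticalValue_denom_pos hα hk).ne']
  ring_nf

/-- `ξ_k` is chosen so that `m - k + 1` copies of its odds sum to exactly `αk`. -/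
theorem gbsCriticalValue_odds (hα : 0 ≤ α) (hk : k ≤ m) :
    gbsCriticalValue m α k / (1 - gbsCriticalValue m α k) = α * k / ((m : ℝ) - k + 1) := by
  rw [one_sub_gbsCriticalValue hα hk, gbsCriticalValue,
    div_div_div_cancel_right₀ (gbsCriticalValue_denom_pos hα hk).ne']

theorem gbsCriticalValue_lt_one (hα : 0 ≤ α) (hk : k ≤ m) : gbsCriticalValue m α k < 1 := by
  have hmk : (0 : ℝ) < m - k + 1 := by
    have : (k : ℝ) ≤ m := by exact_mod_cast hk
    linarith
  rw [← sub_pos, one_sub_gbsCriticalValue hα hk]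
  exact div_pos hmk (gbsCriticalValue_denom_pos hα hk)

end GBS

theorem div_one_sub_le_div_one_sub {a b : ℝ} (hab : a ≤ b) (hb : b < 1) :
    a / (1 - a) ≤ b / (1 - b) := by
  rw [div_le_div_iff₀ (by linarith) (by linarith)]
  nlinarith

/-- Any family of values bounded by `ξ_k` satisfies the [A-DBH-SD] constraint at level `k`. -/
theorem sum_odds_le_of_le_gbsCriticalValue {ι : Type*} {m k : ℕ} {α : ℝ} (hα : 0 ≤ α)
    (hk : k ≤ m) {x : ι → ℝ} (hx : ∀ i, x i ≤ gbsCriticalValue m α k)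
    (S : Finset ι) (hS : S.card = m - k + 1) :
    ∑ i ∈ S, x i / (1 - x i) ≤ α * k := by
  have hmk : ((m - k + 1 : ℕ) : ℝ) = (m : ℝ) - k + 1 := by
    push_cast [Nat.cast_sub hk]
    ring
  have hmk_pos : (0 : ℝ) < m - k + 1 := by
    rw [← hmk]
    positivity
  calc ∑ i ∈ S, x i / (1 - x i)
      ≤ ∑ _i ∈ S, gbsCriticalValue m α k / (1 - gbsCriticalValue m α k) :=
        sum_le_sum fun i _ => div_one_sub_le_div_one_sub (hx i) (gbsCriticalValue_lt_one hα hk)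
    _ = α * k := by
        rw [sum_const, nsmul_eq_mul, hS, gbsCriticalValue_odds hα hk, hmk]
        field_simp

theorem A_DBH_SD_rejects_more_than_GBS_general
    (m : ℕ) (α : ℝ) (hα : α ∈ Set.Ioo (0 : ℝ) 1)
    (A : Finset ℝ) (hA : ∀ t ∈ A, t ∈ Set.Icc (0 : ℝ) 1)
    (p : Fin m → ℝ) (hp : ∀ i, p i ∈ A)
    (F : Fin m → ℝ → ℝ)
    (hFsup : ∀ i, ∀ t ∈ Set.Icc (0 : ℝ) 1, F i t ≤ t)
    (τ : ℕ → ℝ) (hτ0 : τ 0 = 0)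
    (hτk : ∀ k, 1 ≤ k → k ≤ m → IsGreatest {t : ℝ | t ∈ A ∧ (∀ i, F i t < 1) ∧
      ∀ S : Finset (Fin m), S.card = m - k + 1 →
        ∑ i ∈ S, F i t / (1 - F i t) ≤ α * k} (τ k))
    :
    rejSD m (fun k => α * k / ((m : ℝ) - (1 - α) * k + 1)) p ⊆ rejSD m τ p := by
  have hα0 : 0 ≤ α := hα.1.le
  refine rejSD_subset_rejSD (σ := gbsCriticalValue m α) (gbsCriticalValue_monotoneOn hα0) ?_
  intro k hk j hj
  rcases Nat.eq_zero_or_pos k with rfl | hk1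
  · rwa [hτ0, ← gbsCriticalValue_zero (m := m) (α := α)]
  have hFξ : ∀ i, F i (p j) ≤ gbsCriticalValue m α k :=
    fun i => (hFsup i _ (hA _ (hp j))).trans hj
  refine (hτk k hk1 hk).2 ⟨hp j, fun i => (hFξ i).trans_lt (gbsCriticalValue_lt_one hα0 hk), ?_⟩
  exact fun S hS => sum_odds_le_of_le_gbsCriticalValue hα0 hk hFξ S hS

/-- [A-DBH-SD] rejects at least as much as the
Gavrilov-Benjamini-Sarkar step-down procedure. -/
theorem A_DBH_SD_rejects_more_than_GBS
    (m : ℕ) (hm : 1 ≤ m) (α : ℝ) (hα : α ∈ Set.Ioo (0 : ℝ) 1)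
    (A : Finset ℝ) (hA0 : (0 : ℝ) ∈ A) (hA : ∀ t ∈ A, t ∈ Set.Icc (0 : ℝ) 1)
    (p : Fin m → ℝ) (hp : ∀ i, p i ∈ A)
    (F : Fin m → ℝ → ℝ)
    (hFmono : ∀ i, MonotoneOn (F i) (Set.Icc 0 1))
    (hFrange : ∀ i, ∀ t ∈ Set.Icc (0 : ℝ) 1, F i t ∈ Set.Icc (0 : ℝ) 1)
    (hF0 : ∀ i, F i 0 = 0) (hF1 : ∀ i, F i 1 = 1)
    (hFsup : ∀ i, ∀ t ∈ Set.Icc (0 : ℝ) 1, F i t ≤ t)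
    (τ : ℕ → ℝ) (hτ0 : τ 0 = 0)
    (hτk : ∀ k, 1 ≤ k → k ≤ m → IsGreatest {t : ℝ | t ∈ A ∧ (∀ i, F i t < 1) ∧
      ∀ S : Finset (Fin m), S.card = m - k + 1 →
        ∑ i ∈ S, F i t / (1 - F i t) ≤ α * k} (τ k))
    :
    rejSD m (fun k => α * k / ((m : ℝ) - (1 - α) * k + 1)) p ⊆ rejSD m τ p :=
  A_DBH_SD_rejects_more_than_GBS_general m α hα A hA p hp F hFsup τ hτ0 hτk
end

section
/- Fix i ∈ {1,…,m}. Let k̂ = max{k ∈ {0,…,m} : #{j : p_j ≤ τ_k} ≥ k} be the number of rejections of the step-up procedure SU(τ) on p_1,…,p_m; let k̂′⁻ⁱ = max{k ∈ {0,…,m−1} : #{j ≠ i : p_j ≤ τ_{k+1}} ≥ k} be the number of rejections of the step-up procedure on the m−1 p-values (p_j)_{j≠i} with critical values (τ_2,…,τ_m); and let k̂′ = max{k ∈ {0,…,m} : #{j : p_j ≤ τ′_k} ≥ k} be the number of rejections of the step-up procedure on p_1,…,p_m with critical values (τ′_1,…,τ′_m) = (τ_2,…,τ_m,τ_m). Then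 the following are equivalent: (i) p_i ≤ τ_{k̂}; (ii) p_i ≤ τ_{k̂′⁻ⁱ+1}; (iii) k̂′⁻ⁱ + 1 = k̂. Moreover, if p_i > τ_m then k̂′ = k̂′⁻ⁱ. -/
open Finset

/-- key combinatorial lemma for step-up procedures.
`khat` is the number of rejections of SU(τ) on all `m` p-values,
`khatpi` (≗ k̂′⁻ⁱ) the number of rejections of the step-up procedure on `(p_j)_{j ≠ i}`
with critical values `(τ_2, …, τ_m)`, and `khat'` (≗ k̂′) the number of rejections of the
step-up procedure on all `m` p-values with critical values `(τ_2, …, τ_m, τ_m)`. -/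
theorem stepup_key_lemma
    (m : ℕ) (hm : 1 ≤ m)
    (τ : ℕ → ℝ) (hτ0 : τ 0 = 0)
    (hτmono : ∀ k l, k ≤ l → l ≤ m → τ k ≤ τ l)
    (hτ01 : ∀ k ≤ m, τ k ∈ Set.Icc (0 : ℝ) 1)
    (p : Fin m → ℝ) (hp : ∀ i, p i ∈ Set.Icc (0 : ℝ) 1)
    (i : Fin m)
    (khat khatpi khat' : ℕ)
    (hkhat : khat = sSup {k | k ≤ m ∧ k ≤ (univ.filter (fun j => p j ≤ τ k)).card})
    (hkhatpi : khatpi = sSup {k | k ≤ m - 1 ∧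
      k ≤ (univ.filter (fun j => j ≠ i ∧ p j ≤ τ (k + 1))).card})
    (hkhat' : khat' = sSup {k | k ≤ m ∧
      k ≤ (univ.filter (fun j => p j ≤ τ (min (k + 1) m))).card}) :
    ((p i ≤ τ khat ↔ p i ≤ τ (khatpi + 1))
      ∧ (p i ≤ τ khat ↔ khatpi + 1 = khat))
    ∧ (τ m < p i → khat' = khatpi) := by
  -- notation
  set N : ℝ → ℕ := fun c => (univ.filter (fun j => p j ≤ c)).card with hN
  set N' : ℝ → ℕ := fun c => (univ.filter (fun j => j ≠ i ∧ p j ≤ c)).card with hN'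
  -- basic cardinality facts
  have hN'le : ∀ c : ℝ, N' c ≤ m - 1 := by
    intro c
    have hsub : (univ.filter (fun j => j ≠ i ∧ p j ≤ c)) ⊆ univ.erase i := by
      intro j hj
      simp only [mem_filter, mem_univ, true_and] at hj
      exact mem_erase.2 ⟨hj.1, mem_univ j⟩
    have := Finset.card_le_card hsub
    simpa [Finset.card_erase_of_mem] using this
  have hN'N : ∀ c : ℝ, N' c ≤ N c := by
    intro c
    refine Finset.card_le_card ?_
    intro j hj
    simp only [mem_filter, mem_univ, true_and] at hj ⊢
    exact hj.2
  have hNN' : ∀ c : ℝ, N c ≤ N' c + 1 := by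
    intro c
    have hsub : (univ.filter (fun j => p j ≤ c)) ⊆
        insert i (univ.filter (fun j => j ≠ i ∧ p j ≤ c)) := by
      intro j hj
      simp only [mem_filter, mem_univ, true_and] at hj
      simp only [mem_insert, mem_filter, mem_univ, true_and]
      by_cases hji : j = i
      · exact Or.inl hji
      · exact Or.inr ⟨hji, hj⟩
    exact (Finset.card_le_card hsub).trans (Finset.card_insert_le _ _)
  have hgtEq : ∀ c : ℝ, c < p i → N c = N' c := by
    intro c hc
    have hfe : (univ.filter (fun j => p j ≤ c)) = univ.filter (fun j => j ≠ i ∧ p j ≤ c) := by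
      ext j
      simp only [mem_filter, mem_univ, true_and]
      constructor
      · intro h
        exact ⟨fun he => absurd (he ▸ h) (not_le.2 hc), h⟩
      · exact fun h => h.2
    simp only [hN, hN', hfe]
  have hleIns : ∀ c : ℝ, p i ≤ c → N' c + 1 ≤ N c := by
    intro c hc
    have hi : i ∉ univ.filter (fun j => j ≠ i ∧ p j ≤ c) := by simp
    have hsub : insert i (univ.filter (fun j => j ≠ i ∧ p j ≤ c)) ⊆
        univ.filter (fun j => p j ≤ c) := by
      intro j hj
      simp only [mem_insert, mem_filter, mem_univ, true_and] at hj ⊢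
      rcases hj with rfl | ⟨_, h⟩
      · exact hc
      · exact h
    calc N' c + 1 = (insert i (univ.filter (fun j => j ≠ i ∧ p j ≤ c))).card := by
          rw [Finset.card_insert_of_notMem hi]
      _ ≤ _ := Finset.card_le_card hsub
  have hNmono : ∀ c c' : ℝ, c ≤ c' → N c ≤ N c' :=
    fun c c' h => Finset.card_le_card (fun j hj => by
      simp only [mem_filter, mem_univ, true_and] at hj ⊢; exact hj.trans h)
  have hN'mono : ∀ c c' : ℝ, c ≤ c' → N' c ≤ N' c' :=
    fun c c' h => Finset.card_le_card (fun j hj => by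
      simp only [mem_filter, mem_univ, true_and] at hj ⊢; exact ⟨hj.1, hj.2.trans h⟩)
  -- sSup facts
  have hS1ne : ({k | k ≤ m ∧ k ≤ N (τ k)} : Set ℕ).Nonempty := ⟨0, by simp⟩
  have hS1bdd : BddAbove {k | k ≤ m ∧ k ≤ N (τ k)} := ⟨m, fun k hk => hk.1⟩
  have hkhat_mem : khat ≤ m ∧ khat ≤ N (τ khat) := hkhat ▸ Nat.sSup_mem hS1ne hS1bdd
  have hkhat_ub : ∀ k, k ≤ m → k ≤ N (τ k) → k ≤ khat := by
    intro k h1 h2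
    rw [hkhat]
    exact le_csSup hS1bdd ⟨h1, h2⟩
  have hS2ne : ({k | k ≤ m - 1 ∧ k ≤ N' (τ (k + 1))} : Set ℕ).Nonempty := ⟨0, by simp⟩
  have hS2bdd : BddAbove {k | k ≤ m - 1 ∧ k ≤ N' (τ (k + 1))} := ⟨m - 1, fun k hk => hk.1⟩
  have hkhatpi_mem : khatpi ≤ m - 1 ∧ khatpi ≤ N' (τ (khatpi + 1)) :=
    hkhatpi ▸ Nat.sSup_mem hS2ne hS2bdd
  have hkhatpi_ub : ∀ k, k ≤ m - 1 → k ≤ N' (τ (k + 1)) → k ≤ khatpi := by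
    intro k h1 h2
    rw [hkhatpi]
    exact le_csSup hS2bdd ⟨h1, h2⟩
  -- Fact A : khat ≤ khatpi + 1
  have factA : khat ≤ khatpi + 1 := by
    rcases Nat.eq_zero_or_pos khat with h0 | hpos
    · omega
    · obtain ⟨k, rfl⟩ := Nat.exists_eq_add_of_lt hpos
      simp only [zero_add] at *
      have h1 : k ≤ m - 1 := by omega
      have h2 : k ≤ N' (τ (k + 1)) := by
        have := hkhat_mem.2
        have := hNN' (τ (k + 1))
        omega
      have := hkhatpi_ub k h1 h2
      omega
  -- Fact B : p i ≤ τ (khatpi + 1) → khat = khatpi + 1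
  have factB : p i ≤ τ (khatpi + 1) → khat = khatpi + 1 := by
    intro hpi
    have h1 : khatpi + 1 ≤ m := by have := hkhatpi_mem.1; omega
    have h2 : khatpi + 1 ≤ N (τ (khatpi + 1)) := by
      have := hleIns (τ (khatpi + 1)) hpi
      have := hkhatpi_mem.2
      omega
    have := hkhat_ub _ h1 h2
    omega
  -- Fact C : khatpi + 1 = khat → p i ≤ τ khat
  have factC : khatpi + 1 = khat → p i ≤ τ khat := by
    intro heq
    by_contra hgt
    push_neg at hgt
    have hEq := hgtEq (τ khat) hgt
    have hk1 : khat ≤ N' (τ khat) := by rw [← hEq]; exact hkhat_mem.2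
    by_cases hcase : khat ≤ m - 1
    · have hmono : τ khat ≤ τ (khat + 1) := by
        apply hτmono <;> omega
      have : khat ≤ N' (τ (khat + 1)) := hk1.trans (hN'mono _ _ hmono)
      have := hkhatpi_ub khat hcase this
      omega
    · have hkm : khat = m := by have := hkhat_mem.1; omega
      have := hN'le (τ khat)
      omega
  refine ⟨⟨?_, ?_⟩, ?_⟩
  · constructor
    · intro hpi
      have hmono : τ khat ≤ τ (khatpi + 1) := by
        apply hτmono _ _ factA
        have := hkhatpi_mem.1; omega
      exact hpi.trans hmono
    · intro hpi
      have := factB hpi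
      rw [this]
      exact hpi
  · constructor
    · intro hpi
      have hmono : τ khat ≤ τ (khatpi + 1) := by
        apply hτmono _ _ factA
        have := hkhatpi_mem.1; omega
      exact (factB (hpi.trans hmono)).symm
    · exact factC
  · intro hgt
    rw [hkhat', hkhatpi]
    congr 1
    ext k
    simp only [Set.mem_setOf_eq]
    constructor
    · rintro ⟨h1, h2⟩
      by_cases hk : k ≤ m - 1
      · have hmin : min (k + 1) m = k + 1 := by omega
        rw [hmin] at h2
        have hτle : τ (k + 1) ≤ τ m := hτmono _ _ (by omega) le_rfl
        have hEq : (univ.filter (fun j => p j ≤ τ (k + 1))).card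
            = (univ.filter (fun j => j ≠ i ∧ p j ≤ τ (k + 1))).card :=
          hgtEq _ (lt_of_le_of_lt hτle hgt)
        exact ⟨hk, by rw [← hEq]; exact h2⟩
      · exfalso
        have hkm : k = m := by omega
        have hmin : min (k + 1) m = m := by omega
        rw [hmin] at h2
        have hEq : (univ.filter (fun j => p j ≤ τ m)).card
            = (univ.filter (fun j => j ≠ i ∧ p j ≤ τ m)).card := hgtEq _ hgt
        have h3 : (univ.filter (fun j => j ≠ i ∧ p j ≤ τ m)).card ≤ m - 1 := hN'le (τ m)
        omega
    · rintro ⟨h1, h2⟩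
      have hmin : min (k + 1) m = k + 1 := by omega
      have hτle : τ (k + 1) ≤ τ m := hτmono _ _ (by omega) le_rfl
      have hEq : (univ.filter (fun j => p j ≤ τ (k + 1))).card
          = (univ.filter (fun j => j ≠ i ∧ p j ≤ τ (k + 1))).card :=
        hgtEq _ (lt_of_le_of_lt hτle hgt)
      refine ⟨by omega, ?_⟩
      rw [hmin, hEq]
      exact h2
end

section
/- Fix i ∈ {1,…,m}. Let k̃ = max{k ∈ {0,…,m} : #{j : p_j ≤ τ_{k'}} ≥ k' for all k' ≤ k} be the number of rejections of the step-down procedure SD(τ) on p_1,…,p_m; let k̃⁻ⁱ be the number of rejections of the step-down procedure on the m−1 p-values (p_j)_{j≠i} with critical values (τ_1,…,τ_{m−1}); and let k̃′⁻ⁱ be the number of rejections of the step-down procedure on (p_j)_{j≠i} with critical values (τ_2,…,τ_m). Then the following are equivalent: (i) p_i ≤ τ_{k̃}; (ii) p_i ≤ τ_{k̃⁻ⁱ+1}; (iii) k̃′⁻ⁱ + 1 = k̃. Moreover, if p_i > τ_{k̃⁻ⁱ+1} then k̃ = k̃⁻ⁱ. -/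
open Finset

/-- key combinatorial lemma for step-down procedures.
`ktil` is the number of rejections of SD(τ) on all `m` p-values,
`ktilmi` (≗ k̃⁻ⁱ) the number of rejections of the step-down procedure on `(p_j)_{j ≠ i}`
with critical values `(τ_1, …, τ_{m-1})`, and `ktil'mi` (≗ k̃′⁻ⁱ) the number of rejections
of the step-down procedure on `(p_j)_{j ≠ i}` with critical values `(τ_2, …, τ_m)`. -/
theorem stepdown_key_lemma
    (m : ℕ) (hm : 1 ≤ m)
    (τ : ℕ → ℝ) (hτ0 : τ 0 = 0)
    (hτmono : ∀ k l, k ≤ l → l ≤ m → τ k ≤ τ l)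
    (hτ01 : ∀ k ≤ m, τ k ∈ Set.Icc (0 : ℝ) 1)
    (p : Fin m → ℝ) (hp : ∀ i, p i ∈ Set.Icc (0 : ℝ) 1)
    (i : Fin m)
    (ktil ktilmi ktil'mi : ℕ)
    (hktil : ktil = sSup {k | k ≤ m ∧
      ∀ k' ≤ k, k' ≤ (univ.filter (fun j => p j ≤ τ k')).card})
    (hktilmi : ktilmi = sSup {k | k ≤ m - 1 ∧
      ∀ k' ≤ k, k' ≤ (univ.filter (fun j => j ≠ i ∧ p j ≤ τ k')).card})
    (hktil'mi : ktil'mi = sSup {k | k ≤ m - 1 ∧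
      ∀ k' ≤ k, k' ≤ (univ.filter (fun j => j ≠ i ∧ p j ≤ τ (k' + 1))).card}) :
    ((p i ≤ τ ktil ↔ p i ≤ τ (ktilmi + 1))
      ∧ (p i ≤ τ ktil ↔ ktil'mi + 1 = ktil))
    ∧ (τ (ktilmi + 1) < p i → ktil = ktilmi) := by
  -- sSup specifications for the three step-down counts
  have hbdd1 : BddAbove {k | k ≤ m ∧
      ∀ k' ≤ k, k' ≤ (univ.filter (fun j => p j ≤ τ k')).card} :=
    ⟨m, fun x hx => hx.1⟩
  have hbdd2 : BddAbove {k | k ≤ m - 1 ∧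
      ∀ k' ≤ k, k' ≤ (univ.filter (fun j => j ≠ i ∧ p j ≤ τ k')).card} :=
    ⟨m - 1, fun x hx => hx.1⟩
  have hbdd3 : BddAbove {k | k ≤ m - 1 ∧
      ∀ k' ≤ k, k' ≤ (univ.filter (fun j => j ≠ i ∧ p j ≤ τ (k' + 1))).card} :=
    ⟨m - 1, fun x hx => hx.1⟩
  have hmem1 : ktil ≤ m ∧ ∀ k' ≤ ktil, k' ≤ (univ.filter (fun j => p j ≤ τ k')).card := by
    have hne : 0 ∈ {k | k ≤ m ∧
        ∀ k' ≤ k, k' ≤ (univ.filter (fun j => p j ≤ τ k')).card} :=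
      ⟨Nat.zero_le m, fun k' hk' => by omega⟩
    rw [hktil]
    exact Nat.sSup_mem ⟨0, hne⟩ hbdd1
  have hmax1 : ∀ k, k ≤ m →
      (∀ k' ≤ k, k' ≤ (univ.filter (fun j => p j ≤ τ k')).card) → k ≤ ktil :=
    fun k hk h => hktil ▸ le_csSup hbdd1 ⟨hk, h⟩
  have hmem2 : ktilmi ≤ m - 1 ∧
      ∀ k' ≤ ktilmi, k' ≤ (univ.filter (fun j => j ≠ i ∧ p j ≤ τ k')).card := by
    have hne : 0 ∈ {k | k ≤ m - 1 ∧
        ∀ k' ≤ k, k' ≤ (univ.filter (fun j => j ≠ i ∧ p j ≤ τ k')).card} :=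
      ⟨Nat.zero_le _, fun k' hk' => by omega⟩
    rw [hktilmi]
    exact Nat.sSup_mem ⟨0, hne⟩ hbdd2
  have hmax2 : ∀ k, k ≤ m - 1 →
      (∀ k' ≤ k, k' ≤ (univ.filter (fun j => j ≠ i ∧ p j ≤ τ k')).card) → k ≤ ktilmi :=
    fun k hk h => hktilmi ▸ le_csSup hbdd2 ⟨hk, h⟩
  have hmem3 : ktil'mi ≤ m - 1 ∧
      ∀ k' ≤ ktil'mi, k' ≤ (univ.filter (fun j => j ≠ i ∧ p j ≤ τ (k' + 1))).card := by
    have hne : 0 ∈ {k | k ≤ m - 1 ∧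
        ∀ k' ≤ k, k' ≤ (univ.filter (fun j => j ≠ i ∧ p j ≤ τ (k' + 1))).card} :=
      ⟨Nat.zero_le _, fun k' hk' => by omega⟩
    rw [hktil'mi]
    exact Nat.sSup_mem ⟨0, hne⟩ hbdd3
  have hmax3 : ∀ k, k ≤ m - 1 →
      (∀ k' ≤ k, k' ≤ (univ.filter (fun j => j ≠ i ∧ p j ≤ τ (k' + 1))).card) → k ≤ ktil'mi :=
    fun k hk h => hktil'mi ▸ le_csSup hbdd3 ⟨hk, h⟩
  -- counting lemmas
  have hMN : ∀ k, (univ.filter (fun j => j ≠ i ∧ p j ≤ τ k)).card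
      ≤ (univ.filter (fun j => p j ≤ τ k)).card := by
    intro k
    apply Finset.card_le_card
    intro j hj
    simp only [mem_filter, mem_univ, true_and] at *
    exact hj.2
  have hNM1 : ∀ k, (univ.filter (fun j => p j ≤ τ k)).card
      ≤ (univ.filter (fun j => j ≠ i ∧ p j ≤ τ k)).card + 1 := by
    intro k
    have hsub : (univ.filter (fun j => p j ≤ τ k))
        ⊆ insert i (univ.filter (fun j => j ≠ i ∧ p j ≤ τ k)) := by
      intro j hj
      simp only [mem_filter, mem_insert, mem_univ, true_and] at *
      by_cases h : j = i
      · exact Or.inl h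
      · exact Or.inr ⟨h, hj⟩
    exact (Finset.card_le_card hsub).trans (Finset.card_insert_le _ _)
  have hNsucc : ∀ k, p i ≤ τ k →
      (univ.filter (fun j => j ≠ i ∧ p j ≤ τ k)).card + 1
        ≤ (univ.filter (fun j => p j ≤ τ k)).card := by
    intro k hpi
    have hni : i ∉ univ.filter (fun j => j ≠ i ∧ p j ≤ τ k) := by simp
    have hsub : insert i (univ.filter (fun j => j ≠ i ∧ p j ≤ τ k))
        ⊆ univ.filter (fun j => p j ≤ τ k) := by
      intro j hj
      simp only [mem_insert, mem_filter, mem_univ, true_and] at *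
      rcases hj with rfl | hj
      · exact hpi
      · exact hj.2
    calc (univ.filter (fun j => j ≠ i ∧ p j ≤ τ k)).card + 1
        = (insert i (univ.filter (fun j => j ≠ i ∧ p j ≤ τ k))).card :=
          (Finset.card_insert_of_notMem hni).symm
      _ ≤ _ := Finset.card_le_card hsub
  have hNle : ∀ k, τ k < p i →
      (univ.filter (fun j => p j ≤ τ k)).card
        ≤ (univ.filter (fun j => j ≠ i ∧ p j ≤ τ k)).card := by
    intro k hk
    apply Finset.card_le_card
    intro j hj
    simp only [mem_filter, mem_univ, true_and] at *
    refine ⟨fun h => ?_, hj⟩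
    subst h; exact absurd hj (not_le.mpr hk)
  have hMmono : ∀ k l, k ≤ l → l ≤ m →
      (univ.filter (fun j => j ≠ i ∧ p j ≤ τ k)).card
        ≤ (univ.filter (fun j => j ≠ i ∧ p j ≤ τ l)).card := by
    intro k l hkl hlm
    apply Finset.card_le_card
    intro j hj
    simp only [mem_filter, mem_univ, true_and] at *
    exact ⟨hj.1, hj.2.trans (hτmono k l hkl hlm)⟩
  have hfull : ∀ k, m ≤ (univ.filter (fun j => p j ≤ τ k)).card → p i ≤ τ k := by
    intro k hk
    have hc : (univ.filter (fun j => p j ≤ τ k)) = univ := by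
      apply Finset.eq_univ_of_card
      have h1 := Finset.card_filter_le univ (fun j => p j ≤ τ k)
      simp only [Finset.card_univ, Fintype.card_fin] at *
      omega
    have : i ∈ univ.filter (fun j => p j ≤ τ k) := by rw [hc]; exact mem_univ i
    exact (Finset.mem_filter.mp this).2
  -- Step (C): if p i > τ (ktilmi + 1) then ktil = ktilmi
  have hC : τ (ktilmi + 1) < p i → ktil = ktilmi := by
    intro h
    have hle : ktilmi ≤ ktil :=
      hmax1 ktilmi (le_trans hmem2.1 (Nat.sub_le m 1))
        (fun k' hk' => le_trans (hmem2.2 k' hk') (hMN k'))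
    by_contra hne
    have hlt : ktilmi + 1 ≤ ktil := by omega
    have hup : ∀ k', k' ≤ ktilmi + 1 → τ k' < p i := by
      intro k' hk'
      have hmm : ktilmi + 1 ≤ m := by have := hmem2.1; omega
      exact lt_of_le_of_lt (hτmono k' (ktilmi + 1) hk' hmm) h
    rcases Nat.lt_or_ge (ktilmi + 1) m with hcase | hcase
    · have : ktilmi + 1 ≤ ktilmi := by
        apply hmax2 (ktilmi + 1) (by omega)
        intro k' hk'
        exact le_trans (hmem1.2 k' (le_trans hk' hlt)) (hNle k' (hup k' hk'))
      omega
    · have hkm : ktil = m := by have := hmem1.1; omega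
      have ht := hmem1.2 ktil le_rfl
      rw [hkm] at ht
      have hpi : p i ≤ τ m := hfull m ht
      have heq : ktilmi + 1 = m := by have := hmem2.1; omega
      rw [heq] at h
      exact absurd hpi (not_le.mpr h)
  -- Step (A ⇐): if p i ≤ τ (ktilmi + 1) then ktilmi + 1 ≤ ktil
  have hA2 : p i ≤ τ (ktilmi + 1) → ktilmi + 1 ≤ ktil := by
    intro h
    apply hmax1 (ktilmi + 1) (by have := hmem2.1; omega)
    intro k' hk'
    rcases Nat.lt_or_ge k' (ktilmi + 1) with hk | hk
    · exact le_trans (hmem2.2 k' (by omega)) (hMN k')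
    · have hk'eq : k' = ktilmi + 1 := by omega
      subst hk'eq
      have h1 : ktilmi ≤ (univ.filter (fun j => j ≠ i ∧ p j ≤ τ (ktilmi + 1))).card :=
        le_trans (hmem2.2 ktilmi le_rfl)
          (hMmono ktilmi (ktilmi + 1) (Nat.le_succ _) (by have := hmem2.1; omega))
      exact le_trans (Nat.add_le_add_right h1 1) (hNsucc _ h)
  have hA : p i ≤ τ ktil ↔ p i ≤ τ (ktilmi + 1) := by
    constructor
    · intro h
      by_contra hcon
      push_neg at hcon
      have hk := hC hcon
      have hττ : τ ktil ≤ τ (ktilmi + 1) := by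
        rw [hk]
        exact hτmono ktilmi (ktilmi + 1) (Nat.le_succ _) (by have := hmem2.1; omega)
      exact absurd (h.trans hττ) (not_le.mpr hcon)
    · intro h
      exact h.trans (hτmono (ktilmi + 1) ktil (hA2 h) hmem1.1)
  have hB : p i ≤ τ ktil ↔ ktil'mi + 1 = ktil := by
    constructor
    · intro h
      have h1 : 1 ≤ ktil := by
        rcases Nat.eq_zero_or_pos ktil with h0 | h1
        · exfalso
          have hpi0 : p i ≤ τ 1 := by
            have hle0 : p i ≤ (0:ℝ) := by rw [h0, hτ0] at h; exact h
            have := hτmono 0 1 (Nat.zero_le 1) hm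
            rw [hτ0] at this
            exact hle0.trans this
          have hpos : 1 ≤ (univ.filter (fun j => p j ≤ τ 1)).card :=
            Finset.card_pos.mpr ⟨i, Finset.mem_filter.mpr ⟨mem_univ i, hpi0⟩⟩
          have h1k : 1 ≤ ktil := by
            apply hmax1 1 hm
            intro k' hk'
            rcases Nat.le_one_iff_eq_zero_or_eq_one.mp hk' with rfl | rfl
            · exact Nat.zero_le _
            · exact hpos
          omega
        · exact h1
      have h2 : ktil - 1 ≤ ktil'mi := by
        apply hmax3 (ktil - 1) (by have := hmem1.1; omega)
        intro k' hk'
        have hN : k' + 1 ≤ (univ.filter (fun j => p j ≤ τ (k' + 1))).card :=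
          hmem1.2 (k' + 1) (by omega)
        have := hNM1 (k' + 1)
        omega
      have h3 : ktil'mi + 1 ≤ ktil := by
        by_contra hcon
        push_neg at hcon
        have hkk : ktil ≤ ktil'mi := by omega
        have hMk : ktil ≤ (univ.filter (fun j => j ≠ i ∧ p j ≤ τ (ktil + 1))).card :=
          hmem3.2 ktil hkk
        have hklm : ktil + 1 ≤ m := by have := hmem3.1; omega
        have hnew : ktil + 1 ≤ ktil := by
          apply hmax1 (ktil + 1) hklm
          intro k' hk'
          rcases Nat.lt_or_ge k' (ktil + 1) with hk | hk
          · exact hmem1.2 k' (by omega)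
          · have hk'eq : k' = ktil + 1 := by omega
            subst hk'eq
            have hpi' : p i ≤ τ (ktil + 1) :=
              h.trans (hτmono ktil (ktil + 1) (Nat.le_succ _) hklm)
            exact le_trans (Nat.add_le_add_right hMk 1) (hNsucc _ hpi')
        omega
      omega
    · intro heq
      by_contra hpi
      push_neg at hpi
      have hklm : ktil ≤ m - 1 := by
        rcases Nat.lt_or_ge ktil m with hc | hc
        · omega
        · exfalso
          have hkm : ktil = m := le_antisymm hmem1.1 hc
          have ht := hmem1.2 ktil le_rfl
          rw [hkm] at ht
          have := hfull m ht
          rw [hkm] at hpi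
          exact absurd this (not_le.mpr hpi)
      have hkk : ktil ≤ ktil'mi := by
        apply hmax3 ktil hklm
        intro k' hk'
        have hlt : τ k' < p i := lt_of_le_of_lt (hτmono k' ktil hk' hmem1.1) hpi
        have hN : k' ≤ (univ.filter (fun j => p j ≤ τ k')).card := hmem1.2 k' hk'
        have hNM : (univ.filter (fun j => p j ≤ τ k')).card
            ≤ (univ.filter (fun j => j ≠ i ∧ p j ≤ τ k')).card := hNle k' hlt
        have hMM := hMmono k' (k' + 1) (Nat.le_succ _) (by omega)
        omega
      omega
  exact ⟨⟨hA, hB⟩, hC⟩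
end
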